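/- arXiv:1609.09425 — 5 statements merged into one kernel-verified Lean document; each statement's English description precedes it below -/
import Mathlib

section
/- Let μ > 0, λ ≥ 0, and let l ∈ V* be a bounded linear functional on V. Then there exists a unique pair (u, p) ∈ V × Z such that 2μ(ε(u), ε(v))_{L²} + λ(∇·u, ∇·v)_{L²} − (p, v)_{L²} = ⟨l, v⟩ for all v ∈ V, and (u, q)_{L²} = 0 for all q ∈ Z. Moreover the associated Brezzi conditions hold: the form a(u,v) = 2μ(ε(u),ε(v)) + λ(∇·u,∇·v) is bounded on V×V with constant 2μ+3λ and elliptic on Z⊥ with constant 2μC (C the Korn constant on Z⊥), the form b(u,q) = (u,q)_{L²} is bounded with constant 1, and sup_{v∈V} b(v,p)/‖v‖₁ ≥ (1/C₀)‖p‖_{L²} for all p ∈ Z, with C₀ the constant from the inequality ‖z‖₁ ≤ C₀‖z‖_{L²} on Z. -/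
open RealInnerProductSpace

set_option maxHeartbeats 1000000 in
/-- well-posedness of the Lagrange multiplier formulation.

Abstract Hilbert-space formalization of the setting on a bounded connected Lipschitz
domain `Ω ⊂ ℝ³`:  `V` plays the role of `[H¹(Ω)]³` with the norm `‖·‖₁`
(`‖u‖₁² = ‖u‖²_{L²} + ‖∇u‖²_{L²}`), `HL` of `[L²(Ω)]³`, `SL` of the L² space of
symmetric-matrix fields, `QL` of `L²(Ω)`, `WL` of the L² space of matrix fields;
`J : V → HL` is the (injective) embedding, `eps` the symmetric gradient
`ε(u) = ½(∇u + (∇u)ᵀ)`, `dv` the divergence and `grad` the full gradient, with the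
pointwise bounds `‖ε(u)‖ ≤ ‖∇u‖`, `‖∇·u‖ ≤ √3‖∇u‖ `, `‖∇·u‖ ≤ √3‖ε(u)‖`.
`Z = ker ε` is the six-dimensional space of rigid motions; Korn's second inequality
holds on `Z⊥ = {u : (Ju, Jz)_{L²} = 0 ∀ z ∈ Z}` with constant `CK`, and
`‖z‖₁ ≤ C₀‖z‖_{L²}` on `Z`.

Conclusion: for `μ > 0`, `λ ≥ 0` and any bounded functional `l ∈ V*` there is a unique
pair `(u,p) ∈ V × Z` with `2μ(ε(u),ε(v)) + λ(∇·u,∇·v) − (p,v)_{L²} = ⟨l,v⟩` for all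
`v ∈ V` and `(u,q)_{L²} = 0` for all `q ∈ Z`; moreover the Brezzi conditions hold:
`a` is bounded with constant `2μ+3λ`, elliptic on `Z⊥` with constant `2μ·CK`,
`b` is bounded with constant `1`, and the inf-sup constant is `1/C₀`. -/
theorem lagrange_multiplier_formulation_wellposed
    {V HL SL QL WL : Type}
    [NormedAddCommGroup V] [InnerProductSpace ℝ V] [CompleteSpace V] [Nontrivial V]
    [NormedAddCommGroup HL] [InnerProductSpace ℝ HL]
    [NormedAddCommGroup SL] [InnerProductSpace ℝ SL]
    [NormedAddCommGroup QL] [InnerProductSpace ℝ QL]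
    [NormedAddCommGroup WL] [InnerProductSpace ℝ WL]
    (J : V →L[ℝ] HL) (eps : V →L[ℝ] SL) (dv : V →L[ℝ] QL) (grad : V →L[ℝ] WL)
    (hJ : Function.Injective J)
    (hnorm : ∀ u : V, ‖u‖ ^ 2 = ‖J u‖ ^ 2 + ‖grad u‖ ^ 2)
    (heps : ∀ u : V, ‖eps u‖ ≤ ‖grad u‖)
    (hdvg : ∀ u : V, ‖dv u‖ ≤ Real.sqrt 3 * ‖grad u‖)
    (hdve : ∀ u : V, ‖dv u‖ ≤ Real.sqrt 3 * ‖eps u‖)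
    (Z : Submodule ℝ V) (hZ : ∀ v : V, v ∈ Z ↔ eps v = 0)
    (hZdim : Module.finrank ℝ Z = 6)
    (CK : ℝ) (hCK : 0 < CK)
    (hKorn : ∀ u : V, (∀ z ∈ Z, ⟪J u, J z⟫ = 0) → CK * ‖u‖ ^ 2 ≤ ‖eps u‖ ^ 2)
    (C₀ : ℝ) (hC₀ : 0 < C₀)
    (hrig : ∀ z ∈ Z, ‖z‖ ≤ C₀ * ‖J z‖)
    (μ lam : ℝ) (hμ : 0 < μ) (hlam : 0 ≤ lam)
    (l : V →L[ℝ] ℝ) :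
    -- existence and uniqueness of (u, p) ∈ V × Z
    (∃! up : V × Z,
        (∀ v : V,
          2 * μ * ⟪eps up.1, eps v⟫ + lam * ⟪dv up.1, dv v⟫
            - ⟪J (up.2 : V), J v⟫ = l v)
        ∧ ∀ q ∈ Z, ⟪J up.1, J q⟫ = 0)
    -- a is bounded with constant 2μ + 3λ
    ∧ (∀ u v : V,
        2 * μ * ⟪eps u, eps v⟫ + lam * ⟪dv u, dv v⟫ ≤ (2 * μ + 3 * lam) * ‖u‖ * ‖v‖)
    -- a is elliptic on Z⊥ with constant 2μ·CK
    ∧ (∀ u : V, (∀ z ∈ Z, ⟪J u, J z⟫ = 0) →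
        2 * μ * CK * ‖u‖ ^ 2 ≤ 2 * μ * ‖eps u‖ ^ 2 + lam * ‖dv u‖ ^ 2)
    -- b is bounded with constant 1
    ∧ (∀ u : V, ∀ q ∈ Z, ⟪J u, J q⟫ ≤ 1 * ‖u‖ * ‖J q‖)
    -- the inf-sup condition holds with constant 1/C₀
    ∧ (∀ p ∈ Z, ∃ v : V, v ≠ 0 ∧ (1 / C₀) * ‖J p‖ * ‖v‖ ≤ ⟪J v, J p⟫) := by
  classical
  have hs3 : Real.sqrt 3 * Real.sqrt 3 = 3 := Real.mul_self_sqrt (by norm_num)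
  have hJle : ∀ u : V, ‖J u‖ ≤ ‖u‖ := by
    intro u
    nlinarith [hnorm u, norm_nonneg (J u), norm_nonneg u, sq_nonneg ‖grad u‖]
  have hgle : ∀ u : V, ‖grad u‖ ≤ ‖u‖ := by
    intro u
    nlinarith [hnorm u, norm_nonneg (grad u), norm_nonneg u, sq_nonneg ‖J u‖]
  have hepsle : ∀ u : V, ‖eps u‖ ≤ ‖u‖ := fun u => (heps u).trans (hgle u)
  have hdvle : ∀ u : V, ‖dv u‖ ≤ Real.sqrt 3 * ‖u‖ := by
    intro u
    refine (hdvg u).trans ?_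
    have h3 : (0:ℝ) ≤ Real.sqrt 3 := Real.sqrt_nonneg 3
    nlinarith [hgle u]
  -- boundedness of a, with absolute values
  have habs : ∀ u v : V,
      |2 * μ * ⟪eps u, eps v⟫ + lam * ⟪dv u, dv v⟫| ≤ (2 * μ + 3 * lam) * ‖u‖ * ‖v‖ := by
    intro u v
    have h1 : |⟪eps u, eps v⟫| ≤ ‖u‖ * ‖v‖ :=
      (abs_real_inner_le_norm _ _).trans
        (mul_le_mul (hepsle u) (hepsle v) (norm_nonneg _) (norm_nonneg _))
    have h2 : |⟪dv u, dv v⟫| ≤ 3 * (‖u‖ * ‖v‖) := by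
      refine (abs_real_inner_le_norm _ _).trans ?_
      refine le_trans (mul_le_mul (hdvle u) (hdvle v) (norm_nonneg _)
        (by positivity : (0:ℝ) ≤ Real.sqrt 3 * ‖u‖)) (le_of_eq ?_)
      linear_combination (‖u‖ * ‖v‖) * hs3
    calc |2 * μ * ⟪eps u, eps v⟫ + lam * ⟪dv u, dv v⟫|
        ≤ |2 * μ * ⟪eps u, eps v⟫| + |lam * ⟪dv u, dv v⟫| := abs_add_le _ _
      _ = 2 * μ * |⟪eps u, eps v⟫| + lam * |⟪dv u, dv v⟫| := by
          rw [abs_mul (2*μ), abs_mul lam, abs_of_nonneg (by positivity : (0:ℝ) ≤ 2*μ),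
            abs_of_nonneg hlam]
      _ ≤ 2 * μ * (‖u‖ * ‖v‖) + lam * (3 * (‖u‖ * ‖v‖)) := by
          refine add_le_add ?_ ?_
          · exact mul_le_mul_of_nonneg_left h1 (by positivity)
          · exact mul_le_mul_of_nonneg_left h2 hlam
      _ = (2 * μ + 3 * lam) * ‖u‖ * ‖v‖ := by ring
  have habound : ∀ u v : V,
      2 * μ * ⟪eps u, eps v⟫ + lam * ⟪dv u, dv v⟫ ≤ (2 * μ + 3 * lam) * ‖u‖ * ‖v‖ :=
    fun u v => (le_abs_self _).trans (habs u v)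
  -- ellipticity
  have hellip : ∀ u : V, (∀ z ∈ Z, ⟪J u, J z⟫ = 0) →
      2 * μ * CK * ‖u‖ ^ 2 ≤ 2 * μ * ‖eps u‖ ^ 2 + lam * ‖dv u‖ ^ 2 := by
    intro u hu
    have := hKorn u hu
    nlinarith [sq_nonneg ‖dv u‖]
  -- b bounded
  have hbbound : ∀ u : V, ∀ q ∈ Z, ⟪J u, J q⟫ ≤ 1 * ‖u‖ * ‖J q‖ := by
    intro u q _
    calc ⟪J u, J q⟫ ≤ ‖J u‖ * ‖J q‖ := real_inner_le_norm _ _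
      _ ≤ 1 * ‖u‖ * ‖J q‖ := by
          rw [one_mul]; exact mul_le_mul_of_nonneg_right (hJle u) (norm_nonneg _)
  -- inf-sup
  have hinfsup : ∀ p ∈ Z, ∃ v : V, v ≠ 0 ∧ (1 / C₀) * ‖J p‖ * ‖v‖ ≤ ⟪J v, J p⟫ := by
    intro p hp
    by_cases hp0 : p = 0
    · obtain ⟨v, hv⟩ := exists_ne (0 : V)
      exact ⟨v, hv, by simp [hp0]⟩
    · refine ⟨p, hp0, ?_⟩
      have h1 : ‖p‖ ≤ C₀ * ‖J p‖ := hrig p hp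
      have h2 : ⟪J p, J p⟫ = ‖J p‖ ^ 2 := real_inner_self_eq_norm_sq _
      rw [h2]
      have hC₀' : (0:ℝ) < 1 / C₀ := by positivity
      calc (1 / C₀) * ‖J p‖ * ‖p‖ ≤ (1 / C₀) * ‖J p‖ * (C₀ * ‖J p‖) := by
            refine mul_le_mul_of_nonneg_left h1 (by positivity)
        _ = ‖J p‖ ^ 2 := by field_simp
  -- the subspace W = Z⊥ (w.r.t. the L² pairing)
  set W : Submodule ℝ V :=
    { carrier := {u : V | ∀ z ∈ Z, ⟪J u, J z⟫ = 0}
      add_mem' := by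
        intro a b ha hb z hz
        rw [map_add, inner_add_left, ha z hz, hb z hz, add_zero]
      zero_mem' := by intro z hz; simp
      smul_mem' := by
        intro c a ha z hz
        rw [map_smul, real_inner_smul_left, ha z hz, mul_zero] } with hWdef
  have hWmem : ∀ u : V, u ∈ W ↔ ∀ z ∈ Z, ⟪J u, J z⟫ = 0 := fun u => Iff.rfl
  have hWclosed : IsClosed (W : Set V) := by
    have : (W : Set V) = ⋂ z ∈ Z, {u : V | ⟪J u, J z⟫ = 0} := by
      ext u
      simp only [Set.mem_iInter, Set.mem_setOf_eq, SetLike.mem_coe]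
      exact hWmem u
    rw [this]
    refine isClosed_biInter fun z hz => isClosed_eq ?_ continuous_const
    exact (J.continuous.inner continuous_const)
  haveI : CompleteSpace W := hWclosed.completeSpace_coe
  -- the bilinear form a on W
  let Bl : W →ₗ[ℝ] W →ₗ[ℝ] ℝ := LinearMap.mk₂ ℝ
    (fun u v : W => 2 * μ * ⟪eps (u:V), eps (v:V)⟫ + lam * ⟪dv (u:V), dv (v:V)⟫)
    (by intro m₁ m₂ n; simp [inner_add_left]; ring)
    (by intro c m n; simp [real_inner_smul_left]; ring)
    (by intro m n₁ n₂; simp [inner_add_right]; ring)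
    (by intro c m n; simp [real_inner_smul_right]; ring)
  have hBlnorm : ∀ u v : W, ‖Bl u v‖ ≤ (2 * μ + 3 * lam) * ‖u‖ * ‖v‖ := by
    intro u v
    have := habs (u:V) (v:V)
    simpa [Bl, Real.norm_eq_abs] using this
  let B : W →L[ℝ] W →L[ℝ] ℝ := LinearMap.mkContinuous₂ Bl (2 * μ + 3 * lam) hBlnorm
  have hBapp : ∀ u v : W,
      B u v = 2 * μ * ⟪eps (u:V), eps (v:V)⟫ + lam * ⟪dv (u:V), dv (v:V)⟫ := fun u v => rfl
  have hcoer : IsCoercive B := by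
    refine ⟨2 * μ * CK, by positivity, fun u => ?_⟩
    have hu := hKorn (u:V) u.2
    have h1 : ⟪eps (u:V), eps (u:V)⟫ = ‖eps (u:V)‖ ^ 2 := real_inner_self_eq_norm_sq _
    have h2 : ⟪dv (u:V), dv (u:V)⟫ = ‖dv (u:V)‖ ^ 2 := real_inner_self_eq_norm_sq _
    have hnc : ‖u‖ = ‖(u:V)‖ := rfl
    rw [hBapp, h1, h2, hnc]
    nlinarith [sq_nonneg ‖dv (u:V)‖]
  -- Lax–Milgram on W
  let lw : W →L[ℝ] ℝ := l.comp W.subtypeL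
  let u0 : W := hcoer.continuousLinearEquivOfBilin.symm
    ((InnerProductSpace.toDual ℝ W).symm lw)
  have hu0 : ∀ w : W, B u0 w = l (w : V) := by
    intro w
    have h1 := hcoer.continuousLinearEquivOfBilin_apply u0 w
    rw [show hcoer.continuousLinearEquivOfBilin u0
        = (InnerProductSpace.toDual ℝ W).symm lw from
      hcoer.continuousLinearEquivOfBilin.apply_symm_apply _] at h1
    rw [← h1, InnerProductSpace.toDual_symm_apply]
    rfl
  -- finite dimensionality of Z, and the Gram map Φ
  haveI : FiniteDimensional ℝ Z := FiniteDimensional.of_finrank_pos (by rw [hZdim]; norm_num)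
  let Φ : Z →ₗ[ℝ] Module.Dual ℝ Z := LinearMap.mk₂ ℝ
    (fun p q : Z => ⟪J (p:V), J (q:V)⟫)
    (by intro m₁ m₂ n; simp only [Submodule.coe_add, map_add, inner_add_left])
    (by intro c m n
        simp only [Submodule.coe_smul, map_smul, real_inner_smul_left, smul_eq_mul])
    (by intro m n₁ n₂; simp only [Submodule.coe_add, map_add, inner_add_right])
    (by intro c m n
        simp only [Submodule.coe_smul, map_smul, real_inner_smul_right, smul_eq_mul])
  have hJz : ∀ p : Z, J (p:V) = 0 → p = 0 := by
    intro p hp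
    have := hrig (p:V) p.2
    rw [hp, norm_zero, mul_zero] at this
    have : ‖(p:V)‖ = 0 := le_antisymm this (norm_nonneg _)
    exact Subtype.ext (norm_eq_zero.mp this)
  have hΦinj : Function.Injective Φ := by
    intro p q h
    have h0 : Φ (p - q) = 0 := by rw [map_sub, h, sub_self]
    have h1 : ⟪J ((p - q : Z) : V), J ((p - q : Z) : V)⟫ = 0 := by
      have h' := LinearMap.congr_fun h0 (p - q)
      rw [LinearMap.zero_apply] at h'
      exact h'
    have h2 : J ((p - q : Z) : V) = 0 := by
      rw [real_inner_self_eq_norm_sq] at h1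
      exact norm_eq_zero.mp (by nlinarith [norm_nonneg (J ((p - q : Z) : V))])
    have := hJz _ h2
    exact sub_eq_zero.mp this
  have hΦsurj : Function.Surjective Φ :=
    (LinearMap.injective_iff_surjective_of_finrank_eq_finrank
      Subspace.dual_finrank_eq.symm).mp hΦinj
  -- decomposition: every v splits as w + z, w ∈ W, z ∈ Z
  have hdecomp : ∀ v : V, ∃ z : Z, (v - (z:V)) ∈ W := by
    intro v
    let fv : Module.Dual ℝ Z :=
      { toFun := fun q : Z => ⟪J v, J (q:V)⟫
        map_add' := by
          intro q₁ q₂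
          simp only [Submodule.coe_add, map_add, inner_add_right]
        map_smul' := by
          intro c q
          simp only [Submodule.coe_smul, map_smul, real_inner_smul_right, RingHom.id_apply,
            smul_eq_mul] }
    obtain ⟨z, hz⟩ := hΦsurj fv
    refine ⟨z, ?_⟩
    intro q hq
    have h2 : (⟪J (z:V), J q⟫ : ℝ) = ⟪J v, J q⟫ := LinearMap.congr_fun hz ⟨q, hq⟩
    rw [map_sub, inner_sub_left, h2]
    exact sub_self _
  -- the multiplier p
  let g : Module.Dual ℝ Z :=
    { toFun := fun q : Z => 2 * μ * ⟪eps (u0:V), eps (q:V)⟫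
        + lam * ⟪dv (u0:V), dv (q:V)⟫ - l (q:V)
      map_add' := by
        intro q₁ q₂
        simp only [Submodule.coe_add, map_add, inner_add_right]
        ring
      map_smul' := by
        intro c q
        simp only [Submodule.coe_smul, map_smul, real_inner_smul_right, RingHom.id_apply,
          smul_eq_mul]
        ring }
  obtain ⟨p, hpg⟩ := hΦsurj g
  have hpq : ∀ q : Z, ⟪J (p:V), J (q:V)⟫
      = 2 * μ * ⟪eps (u0:V), eps (q:V)⟫ + lam * ⟪dv (u0:V), dv (q:V)⟫ - l (q:V) := by
    intro q
    exact LinearMap.congr_fun hpg q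
  -- the main equation
  have hmain : ∀ v : V,
      2 * μ * ⟪eps (u0:V), eps v⟫ + lam * ⟪dv (u0:V), dv v⟫ - ⟪J (p:V), J v⟫ = l v := by
    intro v
    obtain ⟨z, hw⟩ := hdecomp v
    set w : V := v - (z:V) with hwdef
    have hvw : v = w + (z:V) := by rw [hwdef]; abel
    have hBw : 2 * μ * ⟪eps (u0:V), eps w⟫ + lam * ⟪dv (u0:V), dv w⟫ = l w := by
      have := hu0 ⟨w, hw⟩
      simpa [hBapp] using this
    have hpw : ⟪J (p:V), J w⟫ = 0 := by
      rw [real_inner_comm]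
      exact hw (p:V) p.2
    have hz := hpq z
    rw [hvw]
    simp only [map_add, inner_add_right]
    linear_combination hBw - hpw - hz
  have horth : ∀ q ∈ Z, ⟪J ((u0:V)), J q⟫ = 0 := u0.2
  -- uniqueness
  refine ⟨⟨((u0:V), p), ⟨hmain, horth⟩, ?_⟩, habound, hellip, hbbound, hinfsup⟩
  rintro ⟨u', p'⟩ ⟨heq', horth'⟩
  have hdmem : (u' - (u0:V)) ∈ W := by
    intro z hz
    rw [map_sub, inner_sub_left, horth' z hz, horth z hz, sub_self]
  have hdeq : ∀ v : V, 2 * μ * ⟪eps (u' - (u0:V)), eps v⟫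
      + lam * ⟪dv (u' - (u0:V)), dv v⟫ = ⟪J ((p':V) - (p:V)), J v⟫ := by
    intro v
    have h1 := heq' v
    have h2 := hmain v
    simp only [map_sub, inner_sub_left]
    linear_combination h1 - h2
  have hd0 : u' - (u0:V) = 0 := by
    have h := hdeq (u' - (u0:V))
    have hz : ((p':V) - (p:V)) ∈ (Z : Set V) := sub_mem p'.2 p.2
    have hrhs : ⟪J ((p':V) - (p:V)), J (u' - (u0:V))⟫ = 0 := by
      rw [real_inner_comm]
      exact hdmem _ hz
    rw [hrhs, real_inner_self_eq_norm_sq, real_inner_self_eq_norm_sq] at h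
    have hK := hKorn (u' - (u0:V)) hdmem
    have hl0 : 0 ≤ lam * ‖dv (u' - (u0:V))‖ ^ 2 := mul_nonneg hlam (sq_nonneg _)
    have he0 : ‖eps (u' - (u0:V))‖ ^ 2 ≤ 0 := by nlinarith
    have hd2 : ‖u' - (u0:V)‖ ^ 2 ≤ 0 := by nlinarith
    have : ‖u' - (u0:V)‖ = 0 := by nlinarith [norm_nonneg (u' - (u0:V))]
    exact norm_eq_zero.mp this
  have hu'eq : u' = (u0:V) := sub_eq_zero.mp hd0
  have hp'eq : p' = p := by
    have hJ0 : ∀ v : V, ⟪J ((p':V) - (p:V)), J v⟫ = 0 := by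
      intro v
      have := hdeq v
      rw [hd0] at this
      simp only [map_zero, inner_zero_left, mul_zero] at this
      linarith [this]
    have h2 : J ((p':V) - (p:V)) = 0 := by
      have := hJ0 ((p':V) - (p:V))
      rw [real_inner_self_eq_norm_sq] at this
      exact norm_eq_zero.mp (by nlinarith [norm_nonneg (J ((p':V) - (p:V)))])
    have : ((p' - p : Z) : V) = (p':V) - (p:V) := rfl
    have := hJz (p' - p) (by rw [this]; exact h2)
    exact sub_eq_zero.mp this
  exact Prod.ext hu'eq hp'eq
end

section
/- Equip W = V × Z with the norm ‖(u,p)‖_E = √(‖u‖²_E + ‖p‖²_{L²}), where ‖u‖²_E = a(u,u) + ‖u_Z‖²_{L²}. Then for the saddle point problem of the Lagrange multiplier formulation the Brezzi constants with respect to this norm all equal 1: (i) a(u,v) ≤ ‖u‖_E ‖v‖_E for all u,v ∈ V; (ii) a(u,u) = ‖u‖²_E for all u ∈ Z⊥; (iii) b(u,q) = (u,q)_{L²} ≤ ‖u‖_E ‖q‖_{L²} for all u ∈ V, q ∈ Z; (iv) sup_{u ∈ V} b(u,q)/‖u‖_E ≥ ‖q‖_{L²} for all q ∈ Z. Consequently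 the operator 𝒜(u,p) = (Au + Bp, B*u), with ⟨Au,v⟩ = a(u,v) and ⟨Bq,u⟩ = −(u,q)_{L²}, is an isomorphism from W (with the E-norm) onto its dual. -/
open RealInnerProductSpace

section Setting

variable {V HL SL QL : Type}
  [NormedAddCommGroup V] [InnerProductSpace ℝ V]
  [NormedAddCommGroup HL] [InnerProductSpace ℝ HL]
  [NormedAddCommGroup SL] [InnerProductSpace ℝ SL]
  [NormedAddCommGroup QL] [InnerProductSpace ℝ QL]

/-- The elastic bilinear form `a(u,v) = 2μ(ε(u),ε(v))_{L²} + λ(∇·u,∇·v)_{L²}`. -/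
def aForm (μ lam : ℝ) (eps : V →L[ℝ] SL) (dv : V →L[ℝ] QL) (u v : V) : ℝ :=
  2 * μ * ⟪eps u, eps v⟫ + lam * ⟪dv u, dv v⟫

/-- The E-norm `‖u‖_E = √(a(u,u) + ‖u_Z‖²_{L²})`, with `PZ` the L²-orthogonal
projection of `V` onto the space `Z` of rigid motions. -/
noncomputable def eNorm (μ lam : ℝ) (J : V →L[ℝ] HL) (eps : V →L[ℝ] SL)
    (dv : V →L[ℝ] QL) (PZ : V →ₗ[ℝ] V) (u : V) : ℝ :=
  Real.sqrt (aForm μ lam eps dv u u + ‖J (PZ u)‖ ^ 2)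

end Setting

section Aux
variable {V HL SL QL : Type}
  [NormedAddCommGroup V] [InnerProductSpace ℝ V]
  [NormedAddCommGroup HL] [InnerProductSpace ℝ HL]
  [NormedAddCommGroup SL] [InnerProductSpace ℝ SL]
  [NormedAddCommGroup QL] [InnerProductSpace ℝ QL]

/-- Two-term Cauchy–Schwarz. -/
lemma cs2' (m l A B C D : ℝ) (hm : 0 ≤ m) (hl : 0 ≤ l) :
    m * A * B + l * C * D ≤ Real.sqrt (m * A ^ 2 + l * C ^ 2) * Real.sqrt (m * B ^ 2 + l * D ^ 2) := by
  have key : (m * A * B + l * C * D) ^ 2 ≤ (m * A ^ 2 + l * C ^ 2) * (m * B ^ 2 + l * D ^ 2) := by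
    nlinarith [mul_nonneg (mul_nonneg hm hl) (sq_nonneg (A * D - B * C))]
  calc m * A * B + l * C * D ≤ Real.sqrt ((m * A * B + l * C * D) ^ 2) := by
        rw [Real.sqrt_sq_eq_abs]; exact le_abs_self _
    _ ≤ Real.sqrt ((m * A ^ 2 + l * C ^ 2) * (m * B ^ 2 + l * D ^ 2)) := Real.sqrt_le_sqrt key
    _ = _ := Real.sqrt_mul (by positivity) _

/-- The L²-orthogonal complement of `Z` in `V`. -/
def Kperp (J : V →L[ℝ] HL) (Z : Submodule ℝ V) : Submodule ℝ V where
  carrier := {u | ∀ q ∈ Z, ⟪J u, J q⟫ = 0}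
  add_mem' := by
    intro a b ha hb q hq
    rw [map_add, inner_add_left, ha q hq, hb q hq, add_zero]
  zero_mem' := by intro q hq; rw [map_zero, inner_zero_left]
  smul_mem' := by
    intro c a ha q hq
    rw [map_smul, real_inner_smul_left, ha q hq, mul_zero]

lemma mem_Kperp {J : V →L[ℝ] HL} {Z : Submodule ℝ V} {u : V} :
    u ∈ Kperp J Z ↔ ∀ q ∈ Z, ⟪J u, J q⟫ = 0 := Iff.rfl

lemma isClosed_Kperp (J : V →L[ℝ] HL) (Z : Submodule ℝ V) :
    IsClosed (Kperp J Z : Set V) := by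
  have h : (Kperp J Z : Set V) = ⋂ q ∈ Z, {u : V | ⟪J u, J q⟫ = 0} := by
    ext u
    simp only [Set.mem_iInter, Set.mem_setOf_eq, SetLike.mem_coe, mem_Kperp]
  rw [h]
  exact isClosed_biInter fun q hq =>
    isClosed_eq (Continuous.inner (J.continuous) continuous_const) continuous_const

/-- The elastic form as a continuous bilinear map. -/
noncomputable def aL (μ lam : ℝ) (eps : V →L[ℝ] SL) (dv : V →L[ℝ] QL) :
    V →L[ℝ] V →L[ℝ] ℝ :=
  (2 * μ) • ((innerSL ℝ).bilinearComp eps eps) + lam • ((innerSL ℝ).bilinearComp dv dv)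

lemma aL_apply (μ lam : ℝ) (eps : V →L[ℝ] SL) (dv : V →L[ℝ] QL) (u v : V) :
    aL μ lam eps dv u v = aForm μ lam eps dv u v := by
  simp [aL, aForm, ContinuousLinearMap.bilinearComp_apply]

end Aux

set_option maxHeartbeats 1000000 in
/-- Brezzi constants in the E-norm all equal 1; the saddle point
operator is an isomorphism.

Abstract Hilbert-space formalization: `V ≅ [H¹(Ω)]³` with the norm `‖·‖₁`,
`J : V → HL ≅ [L²(Ω)]³` the embedding, `eps` the symmetric gradient, `dv` the
divergence, `grad` the gradient, `Z = ker ε` the six-dimensional space of rigid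
motions, `PZ` the L²-orthogonal projection onto `Z` (so `u_Z = PZ u` and
`u - PZ u ⊥_{L²} Z`); Korn's inequalities hold.  With
`a(u,v) = 2μ(ε(u),ε(v)) + λ(∇·u,∇·v)`, `b(u,q) = (u,q)_{L²}` and the E-norm
`‖u‖_E = √(a(u,u) + ‖u_Z‖²_{L²})`:
(i) `a(u,v) ≤ ‖u‖_E‖v‖_E`; (ii) `a(u,u) = ‖u‖²_E` on `Z⊥`;
(iii) `b(u,q) ≤ ‖u‖_E‖q‖_{L²}`; (iv) `sup_u b(u,q)/‖u‖_E ≥ ‖q‖_{L²}` on `Z`.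
Consequently `𝒜(u,p) = (Au + Bp, B*u)`, `⟨Au,v⟩ = a(u,v)`, `⟨Bq,u⟩ = −(u,q)_{L²}`,
is an isomorphism of `W = V × Z` onto its dual: every pair of functionals
`(l, g)` is attained by exactly one `(u,p) ∈ V × Z`. -/
theorem brezzi_constants_one_in_E_norm
    {V HL SL QL WL : Type}
    [NormedAddCommGroup V] [InnerProductSpace ℝ V] [CompleteSpace V] [Nontrivial V]
    [NormedAddCommGroup HL] [InnerProductSpace ℝ HL]
    [NormedAddCommGroup SL] [InnerProductSpace ℝ SL]
    [NormedAddCommGroup QL] [InnerProductSpace ℝ QL]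
    [NormedAddCommGroup WL] [InnerProductSpace ℝ WL]
    (J : V →L[ℝ] HL) (eps : V →L[ℝ] SL) (dv : V →L[ℝ] QL) (grad : V →L[ℝ] WL)
    (hJ : Function.Injective J)
    (hnorm : ∀ u : V, ‖u‖ ^ 2 = ‖J u‖ ^ 2 + ‖grad u‖ ^ 2)
    (heps : ∀ u : V, ‖eps u‖ ≤ ‖grad u‖)
    (hdvg : ∀ u : V, ‖dv u‖ ≤ Real.sqrt 3 * ‖grad u‖)
    (hdve : ∀ u : V, ‖dv u‖ ≤ Real.sqrt 3 * ‖eps u‖)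
    (Z : Submodule ℝ V) (hZ : ∀ v : V, v ∈ Z ↔ eps v = 0)
    (hZdim : Module.finrank ℝ Z = 6)
    (PZ : V →ₗ[ℝ] V)
    (hPZmem : ∀ u : V, PZ u ∈ Z)
    (hPZperp : ∀ u : V, ∀ z ∈ Z, ⟪J (u - PZ u), J z⟫ = 0)
    (CK : ℝ) (hCK : 0 < CK)
    (hKorn : ∀ u : V, (∀ z ∈ Z, ⟪J u, J z⟫ = 0) → CK * ‖u‖ ^ 2 ≤ ‖eps u‖ ^ 2)
    (C₀ : ℝ) (hC₀ : 0 < C₀)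
    (hrig : ∀ z ∈ Z, ‖z‖ ≤ C₀ * ‖J z‖)
    (μ lam : ℝ) (hμ : 0 < μ) (hlam : 0 ≤ lam) :
    -- (i) a is bounded with constant 1 in the E-norm
    (∀ u v : V, aForm μ lam eps dv u v
        ≤ eNorm μ lam J eps dv PZ u * eNorm μ lam J eps dv PZ v)
    -- (ii) a agrees with the squared E-norm on Z⊥
    ∧ (∀ u : V, (∀ z ∈ Z, ⟪J u, J z⟫ = 0) →
        aForm μ lam eps dv u u = (eNorm μ lam J eps dv PZ u) ^ 2)
    -- (iii) b is bounded with constant 1 in the E-norm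
    ∧ (∀ u : V, ∀ q ∈ Z, ⟪J u, J q⟫ ≤ eNorm μ lam J eps dv PZ u * ‖J q‖)
    -- (iv) the inf-sup constant is 1
    ∧ (∀ q ∈ Z, ∃ u : V, eNorm μ lam J eps dv PZ u ≠ 0 ∧
        ‖J q‖ * eNorm μ lam J eps dv PZ u ≤ ⟪J u, J q⟫)
    -- the saddle point operator 𝒜 is an isomorphism from W onto its dual
    ∧ (∀ (l : V →L[ℝ] ℝ) (g : Z →ₗ[ℝ] ℝ),
        ∃! up : V × Z,
          (∀ v : V, aForm μ lam eps dv up.1 v - ⟪J (up.2 : V), J v⟫ = l v)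
          ∧ (∀ q : Z, -⟪J up.1, J (q : V)⟫ = g q)) := by
  classical
  have hzeps : ∀ z ∈ Z, eps z = 0 := fun z hz => (hZ z).mp hz
  have hzdv : ∀ z ∈ Z, dv z = 0 := by
    intro z hz
    have h := hdve z
    rw [hzeps z hz, norm_zero, mul_zero] at h
    exact norm_le_zero_iff.mp h
  have haself : ∀ u : V,
      aForm μ lam eps dv u u = 2 * μ * ‖eps u‖ ^ 2 + lam * ‖dv u‖ ^ 2 := by
    intro u; simp [aForm, real_inner_self_eq_norm_sq]
  have hann : ∀ u : V, 0 ≤ aForm μ lam eps dv u u := by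
    intro u; rw [haself]; positivity
  have hEnn : ∀ u : V, 0 ≤ aForm μ lam eps dv u u + ‖J (PZ u)‖ ^ 2 :=
    fun u => add_nonneg (hann u) (sq_nonneg _)
  have hEsq : ∀ u : V,
      (eNorm μ lam J eps dv PZ u) ^ 2 = aForm μ lam eps dv u u + ‖J (PZ u)‖ ^ 2 := by
    intro u; rw [eNorm]; exact Real.sq_sqrt (hEnn u)
  have hEnneg : ∀ u : V, 0 ≤ eNorm μ lam J eps dv PZ u := fun u => Real.sqrt_nonneg _
  have hPZfix : ∀ z ∈ Z, PZ z = z := by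
    intro z hz
    have h1 : ⟪J (z - PZ z), J (z - PZ z)⟫ = 0 :=
      hPZperp z (z - PZ z) (Z.sub_mem hz (hPZmem z))
    have h2 : J (z - PZ z) = 0 := inner_self_eq_zero.mp h1
    have h3 : z - PZ z = 0 := hJ (by rw [h2, map_zero])
    exact (sub_eq_zero.mp h3).symm
  have hEzero : ∀ u : V, eNorm μ lam J eps dv PZ u = 0 → u = 0 := by
    intro u h
    rw [eNorm] at h
    have h0 : aForm μ lam eps dv u u + ‖J (PZ u)‖ ^ 2 = 0 :=
      (Real.sqrt_eq_zero (hEnn u)).mp h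
    have ha1 : aForm μ lam eps dv u u = 0 := by nlinarith [hann u, sq_nonneg ‖J (PZ u)‖]
    have ha2 : ‖J (PZ u)‖ = 0 := by nlinarith [hann u, sq_nonneg ‖J (PZ u)‖, norm_nonneg (J (PZ u))]
    have heps0 : eps u = 0 := by
      rw [haself] at ha1
      have h1 : ‖eps u‖ ^ 2 ≤ 0 := by
        nlinarith [mul_nonneg hlam (sq_nonneg ‖dv u‖)]
      exact norm_eq_zero.mp (sq_eq_zero_iff.mp (le_antisymm h1 (sq_nonneg _)))
    have huZ : u ∈ Z := (hZ u).mpr heps0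
    have hfix : PZ u = u := hPZfix u huZ
    have hJu : J u = 0 := by rw [← hfix]; exact norm_eq_zero.mp ha2
    exact hJ (by rw [hJu, map_zero])
  refine ⟨?_, ?_, ?_, ?_, ?_⟩
  -- (i)
  · intro u v
    have h1 : aForm μ lam eps dv u v
        ≤ 2 * μ * ‖eps u‖ * ‖eps v‖ + lam * ‖dv u‖ * ‖dv v‖ := by
      have c1 : ⟪eps u, eps v⟫ ≤ ‖eps u‖ * ‖eps v‖ := real_inner_le_norm _ _
      have c2 : ⟪dv u, dv v⟫ ≤ ‖dv u‖ * ‖dv v‖ := real_inner_le_norm _ _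
      have m1 : 0 ≤ 2 * μ := by positivity
      unfold aForm
      nlinarith [mul_le_mul_of_nonneg_left c1 m1, mul_le_mul_of_nonneg_left c2 hlam]
    have h2 := cs2' (2*μ) lam ‖eps u‖ ‖eps v‖ ‖dv u‖ ‖dv v‖ (by positivity) hlam
    have h3 : ∀ x : V, Real.sqrt (2 * μ * ‖eps x‖ ^ 2 + lam * ‖dv x‖ ^ 2)
        ≤ eNorm μ lam J eps dv PZ x := by
      intro x
      rw [eNorm, haself]
      exact Real.sqrt_le_sqrt (by nlinarith [sq_nonneg ‖J (PZ x)‖])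
    calc aForm μ lam eps dv u v
        ≤ 2 * μ * ‖eps u‖ * ‖eps v‖ + lam * ‖dv u‖ * ‖dv v‖ := h1
      _ ≤ Real.sqrt (2 * μ * ‖eps u‖ ^ 2 + lam * ‖dv u‖ ^ 2)
          * Real.sqrt (2 * μ * ‖eps v‖ ^ 2 + lam * ‖dv v‖ ^ 2) := h2
      _ ≤ eNorm μ lam J eps dv PZ u * eNorm μ lam J eps dv PZ v :=
          mul_le_mul (h3 u) (h3 v) (Real.sqrt_nonneg _) (hEnneg u)
  -- (ii)
  · intro u hu
    have h1 := hPZperp u (PZ u) (hPZmem u)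
    have h2 := hu (PZ u) (hPZmem u)
    have h3 : ⟪J (PZ u), J (PZ u)⟫ = 0 := by
      rw [map_sub, inner_sub_left, h2] at h1; linarith
    have h4 : J (PZ u) = 0 := inner_self_eq_zero.mp h3
    rw [hEsq u, h4, norm_zero]; ring
  -- (iii)
  · intro u q hq
    have h1 : ⟪J u, J q⟫ = ⟪J (PZ u), J q⟫ := by
      have h := hPZperp u q hq
      rw [map_sub, inner_sub_left] at h; linarith
    have h2 : ⟪J (PZ u), J q⟫ ≤ ‖J (PZ u)‖ * ‖J q‖ := real_inner_le_norm _ _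
    have h3 : ‖J (PZ u)‖ ≤ eNorm μ lam J eps dv PZ u := by
      rw [eNorm]
      have hs : Real.sqrt (‖J (PZ u)‖ ^ 2)
          ≤ Real.sqrt (aForm μ lam eps dv u u + ‖J (PZ u)‖ ^ 2) :=
        Real.sqrt_le_sqrt (by nlinarith [hann u])
      rwa [Real.sqrt_sq (norm_nonneg _)] at hs
    rw [h1]
    exact le_trans h2 (mul_le_mul_of_nonneg_right h3 (norm_nonneg _))
  -- (iv)
  · intro q hq
    by_cases hq0 : q = 0
    · obtain ⟨u₀, hu₀⟩ := exists_ne (0 : V)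
      refine ⟨u₀, fun h => hu₀ (hEzero u₀ h), ?_⟩
      subst hq0; simp
    · have hqE : eNorm μ lam J eps dv PZ q = ‖J q‖ := by
        rw [eNorm, haself, hzeps q hq, hzdv q hq, hPZfix q hq]
        simp [Real.sqrt_sq (norm_nonneg (J q))]
      refine ⟨q, ?_, ?_⟩
      · rw [hqE]
        have hJq : J q ≠ 0 := fun h => hq0 (hJ (by rw [h, map_zero]))
        exact norm_ne_zero_iff.mpr hJq
      · rw [hqE, real_inner_self_eq_norm_mul_norm]
  -- (v)
  · haveI : FiniteDimensional ℝ Z := FiniteDimensional.of_finrank_pos (by rw [hZdim]; norm_num)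
    have solveZ : ∀ φ : Z →ₗ[ℝ] ℝ, ∃ z : Z, ∀ q : Z, ⟪J (z : V), J (q : V)⟫ = φ q := by
      intro φ
      let T : Z →ₗ[ℝ] (Z →ₗ[ℝ] ℝ) := LinearMap.mk₂ ℝ (fun z q => ⟪J (z : V), J (q : V)⟫)
        (fun m n q => by simp [inner_add_left])
        (fun c m q => by simp [real_inner_smul_left])
        (fun m n q => by simp [inner_add_right])
        (fun c m q => by simp [real_inner_smul_right])
      have hTinj : Function.Injective T := by
        intro z₁ z₂ h12
        have h0 : ⟪J (z₁ : V), J (z₁ : V)⟫ - ⟪J (z₁ : V), J (z₂ : V)⟫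
            = ⟪J (z₂ : V), J (z₁ : V)⟫ - ⟪J (z₂ : V), J (z₂ : V)⟫ := by
          have h00 : T z₁ (z₁ - z₂) = T z₂ (z₁ - z₂) := by rw [h12]
          simpa [T, LinearMap.mk₂_apply, map_sub] using h00
        have h : ⟪J (z₁ : V) - J (z₂ : V), J (z₁ : V) - J (z₂ : V)⟫ = 0 := by
          rw [inner_sub_left, inner_sub_right, inner_sub_right]
          linarith [h0]
        have hJ0 : J (z₁ : V) = J (z₂ : V) := sub_eq_zero.mp (inner_self_eq_zero.mp h)
        exact Subtype.ext (hJ hJ0)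
      have hfr : Module.finrank ℝ Z = Module.finrank ℝ (Z →ₗ[ℝ] ℝ) :=
        (Subspace.dual_finrank_eq).symm
      have hsurj : Function.Surjective T :=
        (LinearMap.injective_iff_surjective_of_finrank_eq_finrank hfr).mp hTinj
      obtain ⟨z, hz⟩ := hsurj φ
      exact ⟨z, fun q => by rw [← hz]; simp [T, LinearMap.mk₂_apply]⟩
    haveI : CompleteSpace (Kperp J Z) := (isClosed_Kperp J Z).completeSpace_coe
    set K := Kperp J Z with hKdef
    let aK : K →L[ℝ] K →L[ℝ] ℝ := (aL μ lam eps dv).bilinearComp K.subtypeL K.subtypeL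
    have haK : ∀ x y : K, aK x y = aForm μ lam eps dv (x : V) (y : V) := by
      intro x y
      simp [aK, ContinuousLinearMap.bilinearComp_apply, aL_apply]
    have hcoer : IsCoercive aK := by
      refine ⟨2 * μ * CK, by positivity, fun x => ?_⟩
      have hk := hKorn (x : V) x.2
      have hx : ‖x‖ = ‖(x : V)‖ := rfl
      rw [haK, haself, hx]
      nlinarith [mul_le_mul_of_nonneg_left hk (by positivity : (0:ℝ) ≤ 2 * μ),
        mul_nonneg hlam (sq_nonneg ‖dv (x : V)‖)]
    intro l g
    obtain ⟨z, hzdef⟩ := solveZ (-g)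
    obtain ⟨p, hpdef⟩ := solveZ (-(l.toLinearMap.comp Z.subtype))
    have hzdef' : ∀ q : Z, ⟪J (z : V), J (q : V)⟫ = -(g q) := by
      intro q; have := hzdef q; simpa using this
    have hpdef' : ∀ q : Z, ⟪J (p : V), J (q : V)⟫ = -(l (q : V)) := by
      intro q; have := hpdef q; simpa using this
    let F : K →L[ℝ] ℝ :=
      l.comp K.subtypeL + (innerSL ℝ (J (p : V))).comp (J.comp K.subtypeL)
    have hF : ∀ k : K, F k = l (k : V) + ⟪J (p : V), J (k : V)⟫ := fun k => rfl
    let w : K := hcoer.continuousLinearEquivOfBilin.symm ((InnerProductSpace.toDual ℝ K).symm F)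
    have hw : ∀ k : K, aK w k = F k := by
      intro k
      have h1 := hcoer.continuousLinearEquivOfBilin_apply w k
      have h2 : hcoer.continuousLinearEquivOfBilin w = (InnerProductSpace.toDual ℝ K).symm F :=
        hcoer.continuousLinearEquivOfBilin.apply_symm_apply _
      rw [← h1, h2, InnerProductSpace.toDual_symm_apply]
    set u : V := (z : V) + (w : V) with hudef
    have cond2 : ∀ q : Z, -⟪J u, J (q : V)⟫ = g q := by
      intro q
      have h1 : ⟪J ((z : V)), J (q : V)⟫ = -(g q) := hzdef' q
      have h2 : ⟪J ((w : V)), J (q : V)⟫ = 0 := w.2 (q : V) q.2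
      rw [hudef, map_add, inner_add_left, h1, h2]; ring
    have cond1 : ∀ v : V, aForm μ lam eps dv u v - ⟪J (p : V), J v⟫ = l v := by
      intro v
      have hvk : (v - PZ v) ∈ K := fun q hq => hPZperp v q hq
      have h1 : aForm μ lam eps dv u v = aForm μ lam eps dv (w : V) v := by
        unfold aForm
        rw [hudef, map_add, map_add, hzeps (z : V) z.2, hzdv (z : V) z.2, zero_add, zero_add]
      have h2 : aForm μ lam eps dv (w : V) v
          = aForm μ lam eps dv (w : V) (v - PZ v) + aForm μ lam eps dv (w : V) (PZ v) := by
        unfold aForm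
        rw [map_sub, map_sub, inner_sub_right, inner_sub_right]; ring
      have h3 : aForm μ lam eps dv (w : V) (PZ v) = 0 := by
        unfold aForm
        rw [hzeps _ (hPZmem v), hzdv _ (hPZmem v), inner_zero_right, inner_zero_right]; ring
      have h4 : aForm μ lam eps dv (w : V) (v - PZ v)
          = l (v - PZ v) + ⟪J (p : V), J (v - PZ v)⟫ := by
        have h := hw ⟨v - PZ v, hvk⟩
        rw [haK] at h
        exact h.trans (hF _)
      have h5 : ⟪J (p : V), J (PZ v)⟫ = -(l (PZ v)) := hpdef' ⟨PZ v, hPZmem v⟩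
      have h6 : ⟪J (p : V), J (v - PZ v)⟫ = ⟪J (p : V), J v⟫ - ⟪J (p : V), J (PZ v)⟫ := by
        rw [map_sub, inner_sub_right]
      have h7 : l (v - PZ v) = l v - l (PZ v) := map_sub l v (PZ v)
      rw [h1, h2, h3, h4, h6, h7, h5]; ring
    refine ⟨(u, p), ⟨cond1, cond2⟩, ?_⟩
    rintro ⟨u', p'⟩ ⟨h1', h2'⟩
    have hKu : ∀ q ∈ Z, ⟪J (u' - u), J q⟫ = 0 := by
      intro q hq
      have e1 : -⟪J u', J q⟫ = g ⟨q, hq⟩ := h2' ⟨q, hq⟩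
      have e2 : -⟪J u, J q⟫ = g ⟨q, hq⟩ := cond2 ⟨q, hq⟩
      rw [map_sub, inner_sub_left]; linarith
    have haeq : ∀ v : V,
        aForm μ lam eps dv (u' - u) v = ⟪J ((p' : V) - (p : V)), J v⟫ := by
      intro v
      have e1 := h1' v
      have e2 := cond1 v
      have e3 : aForm μ lam eps dv (u' - u) v
          = aForm μ lam eps dv u' v - aForm μ lam eps dv u v := by
        unfold aForm
        rw [map_sub, map_sub, inner_sub_left, inner_sub_left]; ring
      rw [e3, map_sub, inner_sub_left]
      simp only at e1
      linarith
    have hdu0 : u' - u = 0 := by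
      have hpq : ((p' : V) - (p : V)) ∈ Z := Z.sub_mem p'.2 p.2
      have e3 : aForm μ lam eps dv (u' - u) (u' - u) = 0 := by
        rw [haeq (u' - u), real_inner_comm]
        exact hKu _ hpq
      have heps0 : eps (u' - u) = 0 := by
        rw [haself] at e3
        have h1 : ‖eps (u' - u)‖ ^ 2 ≤ 0 := by
          nlinarith [mul_nonneg hlam (sq_nonneg ‖dv (u' - u)‖)]
        exact norm_eq_zero.mp (sq_eq_zero_iff.mp (le_antisymm h1 (sq_nonneg _)))
      have hduZ : (u' - u) ∈ Z := (hZ (u' - u)).mpr heps0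
      have h2 : ⟪J (u' - u), J (u' - u)⟫ = 0 := hKu _ hduZ
      exact hJ (by rw [inner_self_eq_zero.mp h2, map_zero])
    have hueq : u' = u := sub_eq_zero.mp hdu0
    have hdp : (p' : V) = (p : V) := by
      have e4 : ⟪J ((p' : V) - (p : V)), J ((p' : V) - (p : V))⟫ = 0 := by
        rw [← haeq ((p' : V) - (p : V)), hdu0]
        simp [aForm]
      have e5 : J ((p' : V) - (p : V)) = 0 := inner_self_eq_zero.mp e4
      have e6 : (p' : V) - (p : V) = 0 := hJ (by rw [e5, map_zero])
      exact sub_eq_zero.mp e6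
    exact Prod.ext hueq (Subtype.ext hdp)
end

section
/- Assume 2μ ≥ 1 and equip W = V × Z with the norm ‖(u,p)‖_M = √(‖u‖²_M + ‖p‖²_{L²}), where ‖u‖²_M = a(u,u) + ‖u‖²_{L²}. Then the Brezzi constants of the Lagrange multiplier saddle point problem with respect to this norm are independent of μ, λ and of any discretization: (i) a(u,v) ≤ ‖u‖_M ‖v‖_M for all u,v ∈ V; (ii) a(u,u) ≥ (1+C)⁻¹ ‖u‖²_M for all u ∈ Z⊥, where C = C(Ω) satisfies ‖u‖²_{L²} ≤ C‖ε(u)‖²_{L²} on Z⊥; (iii) b(v,p) = (v,p)_{L²} ≤ ‖v‖_M ‖p‖_{L²}; (iv) inf_{p∈Z} sup_{v∈V} b(v,p)/(‖v‖_M ‖p‖_{L²}) ≥ 1. Consequently the saddle point operator 𝒜 is an isomorphism from W (with the M-norm) onto its dual. -/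
open RealInnerProductSpace

section Setting

variable {V HL SL QL : Type}
  [NormedAddCommGroup V] [InnerProductSpace ℝ V]
  [NormedAddCommGroup HL] [InnerProductSpace ℝ HL]
  [NormedAddCommGroup SL] [InnerProductSpace ℝ SL]
  [NormedAddCommGroup QL] [InnerProductSpace ℝ QL]

/-- The M-norm `‖u‖_M = √(a(u,u) + ‖u‖²_{L²})`. -/
noncomputable def mNorm (μ lam : ℝ) (J : V →L[ℝ] HL) (eps : V →L[ℝ] SL)
    (dv : V →L[ℝ] QL) (u : V) : ℝ :=
  Real.sqrt (aForm μ lam eps dv u u + ‖J u‖ ^ 2)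

end Setting


section AuxLemmas

open RealInnerProductSpace

private lemma rep_lemma' {Z : Type*} [AddCommGroup Z] [Module ℝ Z] [FiniteDimensional ℝ Z]
    (B : Z →ₗ[ℝ] Z →ₗ[ℝ] ℝ) (hB : ∀ p, B p p = 0 → p = 0) (f : Z →ₗ[ℝ] ℝ) :
    ∃! p : Z, ∀ q, B p q = f q := by
  have hinj : Function.Injective B := by
    rw [injective_iff_map_eq_zero]
    intro p hp
    exact hB p (by rw [hp]; rfl)
  have hsurj : Function.Surjective B :=
    (LinearMap.injective_iff_surjective_of_finrank_eq_finrank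
      Subspace.dual_finrank_eq.symm).mp hinj
  obtain ⟨p, hp⟩ := hsurj f
  refine ⟨p, fun q => by rw [hp], fun p' hp' => hinj ?_⟩
  rw [hp]; exact LinearMap.ext hp'

private lemma cs2'_s8 {m lam a b c d : ℝ} (hm : 0 ≤ m) (hl : 0 ≤ lam) :
    (m*(a*c) + lam*(b*d))^2 ≤ (m*a^2+lam*b^2)*(m*c^2+lam*d^2) := by
  nlinarith [sq_nonneg (a*d - b*c), mul_nonneg hm hl, sq_nonneg (a*c), sq_nonneg (b*d)]

end AuxLemmas

set_option maxHeartbeats 4000000 in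
/-- Brezzi constants in the M-norm are independent of `μ`, `λ` and of
any discretization; the saddle point operator is an isomorphism.

Abstract Hilbert-space formalization: `V ≅ [H¹(Ω)]³` with the norm `‖·‖₁`,
`J : V → HL ≅ [L²(Ω)]³` the embedding, `eps` the symmetric gradient, `dv` the
divergence, `grad` the gradient, `Z = ker ε` the six-dimensional space of rigid
motions; Korn's second inequality gives `C = C(Ω)` with `‖u‖²_{L²} ≤ C‖ε(u)‖²` on `Z⊥`.
Assume `2μ ≥ 1`, `λ ≥ 0`.  With `a(u,v) = 2μ(ε(u),ε(v)) + λ(∇·u,∇·v)`,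
`b(u,q) = (u,q)_{L²}` and `‖u‖_M = √(a(u,u) + ‖u‖²_{L²})`:
(i) `a(u,v) ≤ ‖u‖_M‖v‖_M`; (ii) `a(u,u) ≥ (1+C)⁻¹‖u‖²_M` on `Z⊥`;
(iii) `b(v,p) ≤ ‖v‖_M‖p‖_{L²}`; (iv) the inf-sup constant is at least 1.
Consequently the saddle point operator `𝒜` is an isomorphism of `W = V × Z`
onto its dual: every pair of functionals `(l, g)` is attained by exactly one
`(u,p) ∈ V × Z`. -/


theorem brezzi_constants_M_norm_parameter_robust
    {V HL SL QL WL : Type}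
    [NormedAddCommGroup V] [InnerProductSpace ℝ V] [CompleteSpace V] [Nontrivial V]
    [NormedAddCommGroup HL] [InnerProductSpace ℝ HL]
    [NormedAddCommGroup SL] [InnerProductSpace ℝ SL]
    [NormedAddCommGroup QL] [InnerProductSpace ℝ QL]
    [NormedAddCommGroup WL] [InnerProductSpace ℝ WL]
    (J : V →L[ℝ] HL) (eps : V →L[ℝ] SL) (dv : V →L[ℝ] QL) (grad : V →L[ℝ] WL)
    (hJ : Function.Injective J)
    (hnorm : ∀ u : V, ‖u‖ ^ 2 = ‖J u‖ ^ 2 + ‖grad u‖ ^ 2)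
    (heps : ∀ u : V, ‖eps u‖ ≤ ‖grad u‖)
    (hdvg : ∀ u : V, ‖dv u‖ ≤ Real.sqrt 3 * ‖grad u‖)
    (hdve : ∀ u : V, ‖dv u‖ ≤ Real.sqrt 3 * ‖eps u‖)
    (Z : Submodule ℝ V) (hZ : ∀ v : V, v ∈ Z ↔ eps v = 0)
    (hZdim : Module.finrank ℝ Z = 6)
    (CK : ℝ) (hCK : 0 < CK)
    (hKorn : ∀ u : V, (∀ z ∈ Z, ⟪J u, J z⟫ = 0) → CK * ‖u‖ ^ 2 ≤ ‖eps u‖ ^ 2)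
    (C₀ : ℝ) (hC₀ : 0 < C₀)
    (hrig : ∀ z ∈ Z, ‖z‖ ≤ C₀ * ‖J z‖)
    (C : ℝ) (hC : 0 < C)
    (hCZperp : ∀ u : V, (∀ z ∈ Z, ⟪J u, J z⟫ = 0) → ‖J u‖ ^ 2 ≤ C * ‖eps u‖ ^ 2)
    (μ lam : ℝ) (hμ : 1 ≤ 2 * μ) (hlam : 0 ≤ lam) :
    -- (i) a is bounded with constant 1 in the M-norm
    (∀ u v : V, aForm μ lam eps dv u v ≤ mNorm μ lam J eps dv u * mNorm μ lam J eps dv v)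
    -- (ii) a is elliptic on Z⊥ with constant (1+C)⁻¹
    ∧ (∀ u : V, (∀ z ∈ Z, ⟪J u, J z⟫ = 0) →
        (1 + C)⁻¹ * (mNorm μ lam J eps dv u) ^ 2 ≤ aForm μ lam eps dv u u)
    -- (iii) b is bounded with constant 1 in the M-norm
    ∧ (∀ v : V, ∀ p ∈ Z, ⟪J v, J p⟫ ≤ mNorm μ lam J eps dv v * ‖J p‖)
    -- (iv) the inf-sup constant is at least 1
    ∧ (∀ p ∈ Z, ∃ v : V, mNorm μ lam J eps dv v ≠ 0 ∧
        1 * ‖J p‖ * mNorm μ lam J eps dv v ≤ ⟪J v, J p⟫)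
    -- the saddle point operator 𝒜 is an isomorphism from W onto its dual
    ∧ (∀ (l : V →L[ℝ] ℝ) (g : Z →ₗ[ℝ] ℝ),
        ∃! up : V × Z,
          (∀ v : V, aForm μ lam eps dv up.1 v - ⟪J (up.2 : V), J v⟫ = l v)
          ∧ (∀ q : Z, -⟪J up.1, J (q : V)⟫ = g q)) := by
  have h2mu : (0:ℝ) < 2*μ := lt_of_lt_of_le one_pos hμ
  have epsZ : ∀ z ∈ Z, eps z = 0 := fun z hz => (hZ z).mp hz
  have dvZ : ∀ z ∈ Z, dv z = 0 := by
    intro z hz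
    have h := hdve z
    rw [epsZ z hz] at h
    simp only [norm_zero, mul_zero] at h
    exact norm_le_zero_iff.mp h
  have aZl : ∀ z ∈ Z, ∀ v : V, aForm μ lam eps dv z v = 0 := by
    intro z hz v; simp [aForm, epsZ z hz, dvZ z hz]
  have aZr : ∀ (v : V), ∀ z ∈ Z, aForm μ lam eps dv v z = 0 := by
    intro v z hz; simp [aForm, epsZ z hz, dvZ z hz]
  have haA : ∀ u : V, aForm μ lam eps dv u u = 2*μ*‖eps u‖^2 + lam*‖dv u‖^2 := by
    intro u; simp [aForm, real_inner_self_eq_norm_sq]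
  have ha_nonneg : ∀ u : V, 0 ≤ aForm μ lam eps dv u u := by
    intro u; rw [haA]; positivity
  have hm_nonneg : ∀ u : V, 0 ≤ mNorm μ lam J eps dv u := fun u => Real.sqrt_nonneg _
  have hmsq : ∀ u : V, (mNorm μ lam J eps dv u)^2 = aForm μ lam eps dv u u + ‖J u‖^2 := by
    intro u
    rw [mNorm, Real.sq_sqrt (add_nonneg (ha_nonneg u) (sq_nonneg _))]
  have hsqrtA : ∀ u : V, Real.sqrt (aForm μ lam eps dv u u) ≤ mNorm μ lam J eps dv u := by
    intro u
    rw [mNorm]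
    exact Real.sqrt_le_sqrt (by nlinarith [sq_nonneg ‖J u‖])
  -- (i)
  have part1 : ∀ u v : V, aForm μ lam eps dv u v ≤
      mNorm μ lam J eps dv u * mNorm μ lam J eps dv v := by
    intro u v
    have h1 : aForm μ lam eps dv u v ≤
        2*μ*(‖eps u‖*‖eps v‖) + lam*(‖dv u‖*‖dv v‖) := by
      unfold aForm
      exact add_le_add (mul_le_mul_of_nonneg_left (real_inner_le_norm _ _) h2mu.le)
        (mul_le_mul_of_nonneg_left (real_inner_le_norm _ _) hlam)
    have hnn : 0 ≤ 2*μ*(‖eps u‖*‖eps v‖) + lam*(‖dv u‖*‖dv v‖) := by positivity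
    have hAu : (0:ℝ) ≤ 2*μ*‖eps u‖^2 + lam*‖dv u‖^2 := by positivity
    have h2 : 2*μ*(‖eps u‖*‖eps v‖) + lam*(‖dv u‖*‖dv v‖) ≤
        Real.sqrt (aForm μ lam eps dv u u) * Real.sqrt (aForm μ lam eps dv v v) := by
      rw [haA, haA, ← Real.sqrt_mul hAu]
      rw [show 2*μ*(‖eps u‖*‖eps v‖) + lam*(‖dv u‖*‖dv v‖) =
        Real.sqrt ((2*μ*(‖eps u‖*‖eps v‖) + lam*(‖dv u‖*‖dv v‖))^2) from
        (Real.sqrt_sq hnn).symm]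
      exact Real.sqrt_le_sqrt (cs2'_s8 h2mu.le hlam)
    calc aForm μ lam eps dv u v ≤ 2*μ*(‖eps u‖*‖eps v‖) + lam*(‖dv u‖*‖dv v‖) := h1
      _ ≤ Real.sqrt (aForm μ lam eps dv u u) * Real.sqrt (aForm μ lam eps dv v v) := h2
      _ ≤ mNorm μ lam J eps dv u * mNorm μ lam J eps dv v :=
        mul_le_mul (hsqrtA u) (hsqrtA v) (Real.sqrt_nonneg _) (hm_nonneg u)
  refine ⟨part1, ?_, ?_, ?_, ?_⟩
  -- (ii)
  · intro u hu
    have h1 : ‖J u‖^2 ≤ C * ‖eps u‖^2 := hCZperp u hu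
    have h2 : ‖eps u‖^2 ≤ aForm μ lam eps dv u u := by
      rw [haA]; nlinarith [sq_nonneg ‖eps u‖, sq_nonneg ‖dv u‖]
    rw [hmsq, inv_mul_le_iff₀ (by positivity : (0:ℝ) < 1 + C)]
    nlinarith [ha_nonneg u, hC.le]
  -- (iii)
  · intro v p _
    calc ⟪J v, J p⟫ ≤ ‖J v‖ * ‖J p‖ := real_inner_le_norm _ _
      _ ≤ mNorm μ lam J eps dv v * ‖J p‖ := by
        apply mul_le_mul_of_nonneg_right _ (norm_nonneg _)
        calc ‖J v‖ = Real.sqrt (‖J v‖^2) := (Real.sqrt_sq (norm_nonneg _)).symm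
          _ ≤ mNorm μ lam J eps dv v :=
            Real.sqrt_le_sqrt (by nlinarith [ha_nonneg v])
  -- (iv)
  · intro p hp
    by_cases hp0 : p = 0
    · obtain ⟨v, hv⟩ := exists_ne (0 : V)
      have hJv : J v ≠ 0 := fun h => hv (hJ (by simpa using h))
      refine ⟨v, ?_, ?_⟩
      · have hpos : 0 < aForm μ lam eps dv v v + ‖J v‖^2 := by
          have := norm_pos_iff.mpr hJv
          nlinarith [ha_nonneg v]
        exact ne_of_gt (Real.sqrt_pos.mpr hpos)
      · subst hp0; simp
    · refine ⟨p, ?_, ?_⟩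
      · have hJp : J p ≠ 0 := fun h => hp0 (hJ (by simpa using h))
        have hpos : 0 < aForm μ lam eps dv p p + ‖J p‖^2 := by
          have := norm_pos_iff.mpr hJp
          nlinarith [ha_nonneg p]
        exact ne_of_gt (Real.sqrt_pos.mpr hpos)
      · have hm : mNorm μ lam J eps dv p = ‖J p‖ := by
          rw [mNorm, aZl p hp p, zero_add, Real.sqrt_sq (norm_nonneg _)]
        rw [hm, real_inner_self_eq_norm_sq]
        ring_nf
        exact le_refl _
  -- (v) the saddle point problem is uniquely solvable
  · intro l g
    haveI : FiniteDimensional ℝ Z :=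
      FiniteDimensional.of_finrank_pos (by rw [hZdim]; norm_num)
    -- the Gram bilinear form on Z
    set BZ : Z →ₗ[ℝ] Z →ₗ[ℝ] ℝ := LinearMap.mk₂ ℝ (fun p q => ⟪J (p:V), J (q:V)⟫)
      (by intro p p' q; simp [inner_add_left])
      (by intro c p q; simp [real_inner_smul_left])
      (by intro p q q'; simp [inner_add_right])
      (by intro c p q; simp [real_inner_smul_right]) with hBZdef
    have hBZapp : ∀ p q : Z, BZ p q = ⟪J (p:V), J (q:V)⟫ := by
      intro p q; rw [hBZdef]; simp
    have hBZ : ∀ p : Z, BZ p p = 0 → p = 0 := by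
      intro p hp
      rw [hBZapp] at hp
      have h1 : J (p:V) = 0 := inner_self_eq_zero.mp hp
      have h2 : (p:V) = 0 := hJ (by simpa using h1)
      exact Subtype.ext h2
    -- the multiplier p₀
    obtain ⟨p₀, hp₀, -⟩ := rep_lemma' BZ hBZ (-(l.toLinearMap.comp Z.subtype))
    have hp₀' : ∀ q : Z, ⟪J (p₀:V), J (q:V)⟫ = -(l (q:V)) := by
      intro q
      have h := hp₀ q
      rwa [hBZapp] at h
    -- the rigid part z₀
    obtain ⟨z₀, hz₀, -⟩ := rep_lemma' BZ hBZ (-g)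
    have hz₀' : ∀ q : Z, ⟪J (z₀:V), J (q:V)⟫ = -(g q) := by
      intro q
      have h := hz₀ q
      rwa [hBZapp] at h
    -- projection onto Z with respect to the J-inner product
    have proj : ∀ v : V, ∃ z : Z, ∀ q : Z, ⟪J (z:V), J (q:V)⟫ = ⟪J v, J (q:V)⟫ := by
      intro v
      obtain ⟨z, hz, -⟩ := rep_lemma' BZ hBZ
        (((innerSL ℝ (J v)).comp J).toLinearMap.comp Z.subtype)
      refine ⟨z, fun q => ?_⟩
      have h := hz q
      rw [hBZapp] at h
      simpa using h
    -- the orthogonal complement K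
    set K : Submodule ℝ V :=
      { carrier := {u | ∀ z ∈ Z, ⟪J u, J z⟫ = 0}
        add_mem' := by
          intro a b ha hb z hz
          simp only [Set.mem_setOf_eq] at ha hb ⊢
          simp only [map_add, inner_add_left, ha z hz, hb z hz, add_zero]
        zero_mem' := by intro z hz; simp
        smul_mem' := by
          intro c a ha z hz
          simp only [Set.mem_setOf_eq] at ha ⊢
          simp only [map_smul, real_inner_smul_left, ha z hz, mul_zero] } with hKdef
    have hKmem : ∀ u : V, u ∈ K ↔ ∀ z ∈ Z, ⟪J u, J z⟫ = 0 := fun u => Iff.rfl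
    have hKcl : IsClosed (K : Set V) := by
      have hset : (K : Set V) = ⋂ z : Z, ((innerSL ℝ (J (z:V))).comp J) ⁻¹' {0} := by
        ext u
        simp only [Set.mem_iInter, Set.mem_preimage, Set.mem_singleton_iff,
          ContinuousLinearMap.comp_apply, innerSL_apply_apply, SetLike.mem_coe]
        rw [hKmem]
        constructor
        · intro h z; rw [real_inner_comm]; exact h (z:V) z.2
        · intro h z hz; rw [real_inner_comm]; exact h ⟨z, hz⟩
      rw [hset]
      exact isClosed_iInter fun z =>
        isClosed_singleton.preimage (ContinuousLinearMap.continuous _)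
    haveI : CompleteSpace K := hKcl.completeSpace_coe
    -- the bilinear form a as a continuous bilinear map restricted to K
    set aC : V →L[ℝ] V →L[ℝ] ℝ :=
      (2*μ) • ((innerSL ℝ).bilinearComp eps eps) + lam • ((innerSL ℝ).bilinearComp dv dv)
      with haCdef
    have haC : ∀ u v : V, aC u v = aForm μ lam eps dv u v := by
      intro u v; rw [haCdef]; simp [aForm]
    set BK : K →L[ℝ] K →L[ℝ] ℝ := aC.bilinearComp K.subtypeL K.subtypeL with hBKdef
    have hBK : ∀ u v : K, BK u v = aForm μ lam eps dv (u:V) (v:V) := by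
      intro u v; rw [hBKdef]; simp [haC]
    have coer : IsCoercive BK := by
      refine ⟨CK, hCK, fun u => ?_⟩
      have h1 : CK * ‖(u:V)‖^2 ≤ ‖eps (u:V)‖^2 := hKorn _ u.2
      have h2 : ‖u‖ = ‖(u:V)‖ := rfl
      rw [hBK, haA, h2]
      nlinarith [sq_nonneg ‖dv (u:V)‖, sq_nonneg ‖eps (u:V)‖]
    -- solve the reduced problem on K by Lax–Milgram
    obtain ⟨u₀, hu₀⟩ : ∃ u₀ : K, ∀ w : K,
        aForm μ lam eps dv (u₀:V) (w:V) = l (w:V) + ⟪J (p₀:V), J (w:V)⟫ := by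
      set l' : V →L[ℝ] ℝ := l + (innerSL ℝ (J (p₀:V))).comp J with hl'def
      set y : K := (InnerProductSpace.toDual ℝ K).symm (l'.comp K.subtypeL) with hydef
      set u₀ : K := coer.continuousLinearEquivOfBilin.symm y with hu₀def
      refine ⟨u₀, fun w => ?_⟩
      have h1 : ⟪coer.continuousLinearEquivOfBilin u₀, w⟫ = BK u₀ w :=
        coer.continuousLinearEquivOfBilin_apply u₀ w
      have h2 : coer.continuousLinearEquivOfBilin u₀ = y := by
        rw [hu₀def]; exact coer.continuousLinearEquivOfBilin.apply_symm_apply y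
      have h3 : ⟪y, w⟫ = (l'.comp K.subtypeL) w := by
        rw [hydef]; exact InnerProductSpace.toDual_symm_apply
      have h4 : (l'.comp K.subtypeL) w = l (w:V) + ⟪J (p₀:V), J (w:V)⟫ := by
        rw [hl'def]; simp
      rw [← hBK, ← h1, h2, h3, h4]
    -- additivity of aForm
    have haAdd : ∀ u u' v : V, aForm μ lam eps dv (u + u') v =
        aForm μ lam eps dv u v + aForm μ lam eps dv u' v := by
      intro u u' v; simp [aForm, inner_add_left]; ring
    have haSub : ∀ u u' v : V, aForm μ lam eps dv (u - u') v =
        aForm μ lam eps dv u v - aForm μ lam eps dv u' v := by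
      intro u u' v; simp [aForm, inner_sub_left]; ring
    have haAddR : ∀ u v v' : V, aForm μ lam eps dv u (v + v') =
        aForm μ lam eps dv u v + aForm μ lam eps dv u v' := by
      intro u v v'; simp [aForm, inner_add_right]; ring
    -- our constructed pair satisfies the equations
    have our1 : ∀ v : V, aForm μ lam eps dv ((u₀:V) + (z₀:V)) v
        - ⟪J (p₀:V), J v⟫ = l v := by
      intro v
      obtain ⟨z, hz⟩ := proj v
      have hv₀K : v - (z:V) ∈ K := by
        rw [hKmem]
        intro z' hz'
        have hzz := hz ⟨z', hz'⟩
        simp only [map_sub, inner_sub_left]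
        rw [← hzz]
        ring
      have e1 : aForm μ lam eps dv (z₀:V) v = 0 := aZl _ z₀.2 v
      have e2 : aForm μ lam eps dv (u₀:V) (z:V) = 0 := aZr _ _ z.2
      have e3 : aForm μ lam eps dv (u₀:V) (v - (z:V)) =
          l (v - (z:V)) + ⟪J (p₀:V), J (v - (z:V))⟫ := hu₀ ⟨v - (z:V), hv₀K⟩
      have e4 : ⟪J (p₀:V), J (z:V)⟫ = -(l (z:V)) := hp₀' z
      have e5 : aForm μ lam eps dv ((u₀:V) + (z₀:V)) v =
          aForm μ lam eps dv (u₀:V) (v - (z:V)) + aForm μ lam eps dv (u₀:V) (z:V) := by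
        rw [haAdd, e1, add_zero]
        calc aForm μ lam eps dv (u₀:V) v
            = aForm μ lam eps dv (u₀:V) ((v - (z:V)) + (z:V)) := by norm_num
          _ = _ := haAddR _ _ _
      rw [e5, e2, add_zero, e3]
      have e6 : ⟪J (p₀:V), J v⟫ = ⟪J (p₀:V), J (v - (z:V))⟫ + ⟪J (p₀:V), J (z:V)⟫ := by
        simp only [map_sub, inner_sub_right]; ring
      have e7 : l (v - (z:V)) = l v - l (z:V) := by simp
      rw [e6, e4, e7]
      ring
    have our2 : ∀ q : Z, -⟪J ((u₀:V) + (z₀:V)), J (q:V)⟫ = g q := by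
      intro q
      have ha : ⟪J (u₀:V), J (q:V)⟫ = 0 := u₀.2 (q:V) q.2
      have hb : ⟪J (z₀:V), J (q:V)⟫ = -(g q) := hz₀' q
      simp only [map_add, inner_add_left, ha, hb, zero_add, neg_neg]
    refine ⟨((u₀:V) + (z₀:V), p₀), ⟨our1, our2⟩, ?_⟩
    -- uniqueness
    rintro ⟨u', p'⟩ ⟨h1, h2⟩
    obtain ⟨w, hwdef⟩ : ∃ w : V, w = u' - ((u₀:V) + (z₀:V)) := ⟨_, rfl⟩
    obtain ⟨r, hrdef⟩ : ∃ r : Z, r = p' - p₀ := ⟨_, rfl⟩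
    have hw1 : ∀ v : V, aForm μ lam eps dv w v = ⟪J (r:V), J v⟫ := by
      intro v
      have ha := h1 v
      have hb := our1 v
      rw [hwdef, hrdef, haSub]
      simp only [Submodule.coe_sub, map_sub, inner_sub_left]
      simp only at ha
      linarith
    have hw2 : ∀ z ∈ Z, ⟪J w, J z⟫ = 0 := by
      intro z hz
      have ha := h2 ⟨z, hz⟩
      have hb := our2 ⟨z, hz⟩
      rw [hwdef]
      simp only [map_sub, inner_sub_left]
      have hc : ⟪J u', J z⟫ = ⟪J ((u₀:V) + (z₀:V)), J z⟫ := by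
        simp only at ha hb
        linarith [neg_inj.mp (ha.trans hb.symm)]
      rw [hc]; ring
    have hr0 : (r:V) = 0 := by
      have hArr : aForm μ lam eps dv w (r:V) = 0 := aZr _ _ r.2
      have hinner : ⟪J (r:V), J (r:V)⟫ = 0 := by rw [← hw1]; exact hArr
      have hJr : J (r:V) = 0 := inner_self_eq_zero.mp hinner
      exact hJ (by simpa using hJr)
    have hw0 : w = 0 := by
      have hAw : aForm μ lam eps dv w w = 0 := by
        rw [hw1, hr0]; simp
      have heps0 : ‖eps w‖^2 = 0 := by
        rw [haA] at hAw
        nlinarith [sq_nonneg ‖eps w‖, sq_nonneg ‖dv w‖]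
      have hK := hKorn w hw2
      rw [heps0] at hK
      have hle : ‖w‖^2 ≤ 0 := by nlinarith
      have hnz : ‖w‖ = 0 := by nlinarith [sq_nonneg ‖w‖, norm_nonneg w]
      exact norm_eq_zero.mp hnz
    have hu' : u' = (u₀:V) + (z₀:V) := sub_eq_zero.mp (hwdef ▸ hw0)
    have hp'eq : p' = p₀ := by
      have hc : (p' : V) - (p₀ : V) = 0 := by
        rw [← Submodule.coe_sub, ← hrdef, hr0]
      exact Subtype.ext (sub_eq_zero.mp hc)
    exact Prod.ext hu' hp'eq
end

section
/- Let Ω have smooth boundary, μ > 0 and λ > 0. Then for every l ∈ V* there exists a unique triplet (u, p, ν) ∈ V × Q × Z satisfying 2μ(ε(u),ε(v))_{L²} + (p, ∇·v)_{L²} + (ν, v)_{L²} = ⟨l, v⟩ for all v ∈ V, (q, ∇·u)_{L²} − λ⁻¹(p, q)_{L²} = 0 for all q ∈ Q, and (η, u)_{L²} = 0 for all η ∈ Z. Moreover the stability estimate ‖u‖₁ + ‖p‖_{L²} + ‖ν‖_{L²} ≤ C ‖l‖_{V*} holds with a constant C depending on Ω and μ but independent of λ. -/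
/-!
Collect the three fields into the Hilbert space `V × Q × Z` (ℓ²-product) and write the system
as `A x = l ∘ fst` for the bounded symmetric form
`A((u,p,ν),(v,q,η)) = 2μ(εu,εv) + (p,∇·v) + (ν,v) + (q,∇·u) + (η,u) - λ⁻¹(p,q)`.
A bounded symmetric form with an inf-sup bound `γ‖x‖ ≤ ‖A x‖` is an isomorphism onto the dual:
its Riesz operator has closed range, and the orthogonal complement of that range is its kernel.
So everything reduces to an inf-sup constant for `A` that does not depend on `λ`.

With `D = ‖A x‖`, testing with `(u,-p,-ν)` gives `2μ‖εu‖² ≤ D‖x‖`, because the penalty term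
`λ⁻¹‖p‖²` has the right sign. Testing with rigid motions and using Korn's inequality gives
`‖u‖ ≲ ‖εu‖ + D`, and testing with the inf-sup vector of `(p,ν)` gives `‖p‖ + ‖ν‖ ≲ D + ‖εu‖`.
Hence `‖x‖ ≤ a‖εu‖ + bD` and `2μ‖εu‖² ≤ D‖x‖`, so `‖x‖ ≤ (a²/2μ + 2b) D`.
-/

open RealInnerProductSpace

open InnerProductSpace in
theorem bijective_of_symm_of_inf_sup {X : Type*} [NormedAddCommGroup X]
    [InnerProductSpace ℝ X] [CompleteSpace X] {B : X →L[ℝ] X →L[ℝ] ℝ}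
    (hB : ∀ x y, B x y = B y x) {γ : ℝ} (hγ : 0 < γ) (h : ∀ x, γ * ‖x‖ ≤ ‖B x‖) :
    Function.Bijective B := by
  set T := continuousLinearMapOfBilin B
  have hT_apply : ∀ x y, ⟪T x, y⟫ = B x y := continuousLinearMapOfBilin_apply B
  have hT_symm : (T : X →ₗ[ℝ] X).IsSymmetric := fun x y =>
    (hT_apply x y).trans ((hB x y).trans ((hT_apply y x).symm.trans (real_inner_comm _ _)))
  have hT_anti : AntilipschitzWith (Real.toNNReal γ⁻¹) T :=
    T.antilipschitz_of_bound fun x => by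
      rw [Real.coe_toNNReal _ (inv_nonneg.2 hγ.le), inv_mul_eq_div, le_div_iff₀ hγ, mul_comm]
      exact (h x).trans_eq ((toDual ℝ X).symm.norm_map (B x)).symm
  have hT_closed : IsClosed (LinearMap.range (T : X →ₗ[ℝ] X) : Set X) :=
    hT_anti.isClosed_range T.uniformContinuous
  have : CompleteSpace (LinearMap.range (T : X →ₗ[ℝ] X)) := hT_closed.completeSpace_coe
  have hT_surj : Function.Surjective T := by
    refine LinearMap.range_eq_top.mp ?_
    rw [← Submodule.orthogonal_eq_bot_iff, hT_symm.orthogonal_range, LinearMap.ker_eq_bot]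
    exact hT_anti.injective
  have hB_eq : ⇑B = toDual ℝ X ∘ T := funext fun x => by
    simp [T, continuousLinearMapOfBilin]
  rw [hB_eq]
  exact (toDual ℝ X).bijective.comp ⟨hT_anti.injective, hT_surj⟩

theorem exists_mem_inner_map_sub_eq_zero {V H : Type*} [AddCommGroup V] [Module ℝ V]
    [NormedAddCommGroup H] [InnerProductSpace ℝ H] (J : V →ₗ[ℝ] H) (Z : Submodule ℝ V)
    [FiniteDimensional ℝ Z] (u : V) : ∃ z ∈ Z, ∀ z' ∈ Z, ⟪J (u - z), J z'⟫ = 0 := by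
  obtain ⟨z, hz, hJz⟩ := Submodule.mem_map.mp ((Z.map J).orthogonalProjectionOnto (J u)).2
  refine ⟨z, hz, fun z' hz' => ?_⟩
  rw [map_sub, hJz]
  exact (Z.map J).starProjection_inner_eq_zero (J u) (J z') (Submodule.mem_map_of_mem hz')

theorem le_mul_of_le_add_of_mul_sq_le {N s D a b c : ℝ} (hc : 0 < c) (hb : 0 ≤ b) (hD : 0 ≤ D)
    (hlin : N ≤ a * s + b * D) (hsq : c * s ^ 2 ≤ D * N) :
    N ≤ (a ^ 2 / c + 2 * b) * D := by
  have hfirst : 0 ≤ a ^ 2 / c * D := by positivity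
  rcases le_or_gt N (b * D) with hN | hN
  · nlinarith
  -- `c (N - bD)² ≤ c a² s² ≤ a² D N` is a quadratic inequality for `N`
  have hquad : c * (N - b * D) ^ 2 ≤ a ^ 2 * (D * N) := by
    have : (N - b * D) ^ 2 ≤ (a * s) ^ 2 := pow_le_pow_left₀ (by linarith) (by linarith) 2
    nlinarith
  have hN0 : 0 < N := by nlinarith
  rw [add_mul, div_mul_eq_mul_div, ← sub_le_iff_le_add, le_div_iff₀ hc]
  refine le_of_mul_le_mul_left ?_ hN0
  nlinarith [mul_nonneg hc.le (sq_nonneg (b * D))]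

namespace ThreeField

variable {V QL HL SL : Type*} [NormedAddCommGroup V] [InnerProductSpace ℝ V]
  [NormedAddCommGroup QL] [InnerProductSpace ℝ QL]
  [NormedAddCommGroup HL] [InnerProductSpace ℝ HL] [NormedAddCommGroup SL] [InnerProductSpace ℝ SL]
  (J : V →L[ℝ] HL) (eps : V →L[ℝ] SL) (dv : V →L[ℝ] QL) {Z : Submodule ℝ V} (μ lam : ℝ)

abbrev Space (V QL : Type*) [NormedAddCommGroup V] [InnerProductSpace ℝ V]
    [NormedAddCommGroup QL] [InnerProductSpace ℝ QL] (Z : Submodule ℝ V) : Type _ :=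
  WithLp 2 (V × WithLp 2 (QL × Z))

def mk (t : V × QL × Z) : Space V QL Z := WithLp.toLp 2 (t.1, WithLp.toLp 2 t.2)

@[simp] theorem mk_fst (t : V × QL × Z) : (mk t).fst = t.1 := rfl
@[simp] theorem mk_snd_fst (t : V × QL × Z) : (mk t).snd.fst = t.2.1 := rfl
@[simp] theorem mk_snd_snd (t : V × QL × Z) : (mk t).snd.snd = t.2.2 := rfl

theorem mk_bijective : Function.Bijective (mk : V × QL × Z → Space V QL Z) :=
  ((WithLp.equiv 2 _).symm.bijective).comp
    (Function.bijective_id.prodMap (WithLp.equiv 2 _).symm.bijective)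

theorem norm_sq (x : Space V QL Z) :
    ‖x‖ ^ 2 = ‖x.fst‖ ^ 2 + ‖x.snd.fst‖ ^ 2 + ‖(x.snd.snd : V)‖ ^ 2 := by
  rw [WithLp.prod_norm_sq_eq_of_L2, WithLp.prod_norm_sq_eq_of_L2, add_assoc]
  rfl

theorem norm_mk (u : V) (p : QL) (ν : Z) :
    ‖mk (u, p, ν)‖ = √(‖u‖ ^ 2 + ‖p‖ ^ 2 + ‖(ν : V)‖ ^ 2) := by
  rw [← Real.sqrt_sq (norm_nonneg (mk (u, p, ν))), norm_sq]
  rfl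

theorem norm_le_add (x : Space V QL Z) :
    ‖x‖ ≤ ‖x.fst‖ + ‖x.snd.fst‖ + ‖(x.snd.snd : V)‖ := by
  refine le_of_sq_le_sq ?_ (by positivity)
  have := norm_sq x
  nlinarith [norm_nonneg x.fst, norm_nonneg x.snd.fst, norm_nonneg (x.snd.snd : V)]

theorem add_le_sqrt_three_mul_norm (x : Space V QL Z) :
    ‖x.fst‖ + ‖x.snd.fst‖ + ‖(x.snd.snd : V)‖ ≤ √3 * ‖x‖ := by
  refine le_of_sq_le_sq ?_ (by positivity)
  rw [mul_pow, Real.sq_sqrt zero_le_three, norm_sq]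
  nlinarith [sq_nonneg (‖x.fst‖ - ‖x.snd.fst‖), sq_nonneg (‖x.fst‖ - ‖(x.snd.snd : V)‖),
    sq_nonneg (‖x.snd.fst‖ - ‖(x.snd.snd : V)‖)]

variable (Z) in
noncomputable def form : Space V QL Z →L[ℝ] Space V QL Z →L[ℝ] ℝ :=
  let iS : SL →L[ℝ] SL →L[ℝ] ℝ := innerSL ℝ
  let iQ : QL →L[ℝ] QL →L[ℝ] ℝ := innerSL ℝ
  let iH : HL →L[ℝ] HL →L[ℝ] ℝ := innerSL ℝ
  let u : Space V QL Z →L[ℝ] V := WithLp.fstL 2 ℝ V _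
  let p : Space V QL Z →L[ℝ] QL := (WithLp.fstL 2 ℝ QL Z).comp (WithLp.sndL 2 ℝ V _)
  let ν : Space V QL Z →L[ℝ] V :=
    Z.subtypeL.comp ((WithLp.sndL 2 ℝ QL Z).comp (WithLp.sndL 2 ℝ V _))
  (2 * μ) • iS.bilinearComp (eps.comp u) (eps.comp u)
    + iQ.bilinearComp p (dv.comp u) + iH.bilinearComp (J.comp ν) (J.comp u)
    + (iQ.bilinearComp p (dv.comp u)).flip + (iH.bilinearComp (J.comp ν) (J.comp u)).flip
    - lam⁻¹ • iQ.bilinearComp p p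

theorem form_apply (x y : Space V QL Z) :
    form J eps dv Z μ lam x y = 2 * μ * ⟪eps x.fst, eps y.fst⟫ + ⟪x.snd.fst, dv y.fst⟫
      + ⟪J x.snd.snd, J y.fst⟫ + ⟪y.snd.fst, dv x.fst⟫ + ⟪J y.snd.snd, J x.fst⟫
      - lam⁻¹ * ⟪x.snd.fst, y.snd.fst⟫ :=
  rfl

theorem form_comm (x y : Space V QL Z) :
    form J eps dv Z μ lam x y = form J eps dv Z μ lam y x := by
  rw [form_apply, form_apply, real_inner_comm (eps x.fst), real_inner_comm x.snd.fst]
  ring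

theorem form_le_mul_norm (x y : Space V QL Z) :
    form J eps dv Z μ lam x y ≤ ‖form J eps dv Z μ lam x‖ * ‖y‖ :=
  (le_abs_self _).trans ((form J eps dv Z μ lam x).le_opNorm y)

variable (Z) in
def IsSolution (l : V →L[ℝ] ℝ) (u : V) (p : QL) (ν : V) : Prop :=
  (∀ v : V, 2 * μ * ⟪eps u, eps v⟫ + ⟪p, dv v⟫ + ⟪J ν, J v⟫ = l v)
    ∧ (∀ q : QL, ⟪q, dv u⟫ - lam⁻¹ * ⟪p, q⟫ = 0)
    ∧ (∀ η ∈ Z, ⟪J η, J u⟫ = 0)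

theorem form_mk_eq_iff (l : V →L[ℝ] ℝ) (t : V × QL × Z) :
    form J eps dv Z μ lam (mk t) = l.comp (WithLp.fstL 2 ℝ V _)
      ↔ IsSolution J eps dv Z μ lam l t.1 t.2.1 t.2.2 := by
  constructor
  · intro h
    have key : ∀ y, form J eps dv Z μ lam (mk t) y = l y.fst := fun y => DFunLike.congr_fun h y
    refine ⟨fun v => ?_, fun q => ?_, fun η hη => ?_⟩
    · simpa [form_apply] using key (mk (v, 0, 0))
    · simpa [form_apply] using key (mk (0, q, 0))
    · simpa [form_apply] using key (mk (0, 0, ⟨η, hη⟩))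
  · rintro ⟨h_mom, h_div, h_rig⟩
    ext y
    simp only [form_apply, mk_fst, mk_snd_fst, mk_snd_snd, ContinuousLinearMap.comp_apply,
      WithLp.fstL_apply]
    linarith [h_mom y.fst, h_div y.snd.fst, h_rig _ y.snd.snd.2]

variable {J eps dv μ lam}

theorem energy_le (hlam : 0 ≤ lam) (x : Space V QL Z) :
    2 * μ * ‖eps x.fst‖ ^ 2 ≤ ‖form J eps dv Z μ lam x‖ * ‖x‖ := by
  set y := mk (x.fst, -x.snd.fst, -x.snd.snd)
  have hy : ‖y‖ = ‖x‖ := by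
    rw [norm_mk, ← Real.sqrt_sq (norm_nonneg x), norm_sq]
    simp
  have htest : form J eps dv Z μ lam x y
      = 2 * μ * ‖eps x.fst‖ ^ 2 + lam⁻¹ * ‖x.snd.fst‖ ^ 2 := by
    simp only [form_apply, y, mk_fst, mk_snd_fst, mk_snd_snd, real_inner_self_eq_norm_sq,
      inner_neg_left, inner_neg_right, Submodule.coe_neg, map_neg]
    ring
  calc 2 * μ * ‖eps x.fst‖ ^ 2 ≤ form J eps dv Z μ lam x y := by
        rw [htest]
        have := inv_nonneg.2 hlam
        exact le_add_of_nonneg_right (by positivity)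
    _ ≤ _ := hy ▸ form_le_mul_norm J eps dv μ lam x y

theorem norm_le_of_inner_le (hZ : ∀ z ∈ Z, eps z = 0) {CK : ℝ} (hCK : 0 < CK)
    (hKorn : ∀ u : V, (∀ z ∈ Z, ⟪J u, J z⟫ = 0) → CK * ‖u‖ ^ 2 ≤ ‖eps u‖ ^ 2)
    {C₀ : ℝ} (hC₀ : 0 ≤ C₀) (hrig : ∀ z ∈ Z, ‖z‖ ≤ C₀ * ‖J z‖) [FiniteDimensional ℝ Z]
    {u : V} {D : ℝ} (hD : 0 ≤ D) (hu : ∀ z ∈ Z, ⟪J z, J u⟫ ≤ D * ‖z‖) :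
    ‖u‖ ≤ ‖eps u‖ / √CK + C₀ ^ 2 * D := by
  obtain ⟨z, hz, horth⟩ := exists_mem_inner_map_sub_eq_zero (J : V →ₗ[ℝ] HL) Z u
  have hJz : ‖J z‖ ^ 2 ≤ D * ‖z‖ := by
    have h := horth z hz
    rw [ContinuousLinearMap.coe_coe, map_sub, inner_sub_left, real_inner_comm (J z),
      sub_eq_zero] at h
    rw [← real_inner_self_eq_norm_sq, ← h]
    exact hu z hz
  have hz_le : ‖z‖ ≤ C₀ ^ 2 * D := by
    have hJz_le : ‖J z‖ ≤ C₀ * D := by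
      rcases (norm_nonneg (J z)).eq_or_lt with h0 | h0
      · rw [← h0]; positivity
      refine le_of_mul_le_mul_right ?_ h0
      nlinarith [hrig z hz]
    calc ‖z‖ ≤ C₀ * ‖J z‖ := hrig z hz
      _ ≤ C₀ * (C₀ * D) := by gcongr
      _ = C₀ ^ 2 * D := by ring
  have hkorn : ‖u - z‖ ≤ ‖eps u‖ / √CK := by
    have h := hKorn (u - z) horth
    rw [map_sub, hZ z hz, sub_zero] at h
    rw [le_div_iff₀ (Real.sqrt_pos.2 hCK), mul_comm]
    exact le_of_sq_le_sq (by rwa [mul_pow, Real.sq_sqrt hCK.le]) (norm_nonneg _)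
  calc ‖u‖ ≤ ‖u - z‖ + ‖z‖ := norm_le_norm_sub_add u z
    _ ≤ ‖eps u‖ / √CK + C₀ ^ 2 * D := add_le_add hkorn hz_le

theorem inf_sup_le {β : ℝ}
    (hinfsup : ∀ (p : QL), ∀ η ∈ Z, ∃ v : V, v ≠ 0 ∧
        β * √(‖p‖ ^ 2 + ‖J η‖ ^ 2) * ‖v‖ ≤ ⟪p, dv v⟫ + ⟪J v, J η⟫)
    (hμ : 0 ≤ μ) (heps_le : ∀ v, ‖eps v‖ ≤ ‖v‖) {u : V} {p : QL} {ν : V} (hν : ν ∈ Z) {D : ℝ}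
    (h : ∀ w, 2 * μ * ⟪eps u, eps w⟫ + ⟪p, dv w⟫ + ⟪J ν, J w⟫ ≤ D * ‖w‖) :
    β * √(‖p‖ ^ 2 + ‖J ν‖ ^ 2) ≤ D + 2 * μ * ‖eps u‖ := by
  obtain ⟨w, hw, hβw⟩ := hinfsup p ν hν
  have hcs : -(‖eps u‖ * ‖w‖) ≤ ⟪eps u, eps w⟫ :=
    calc -(‖eps u‖ * ‖w‖) ≤ -(‖eps u‖ * ‖eps w‖) := by gcongr; exact heps_le w
      _ ≤ ⟪eps u, eps w⟫ := neg_le_of_abs_le (abs_real_inner_le_norm _ _)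
  refine le_of_mul_le_mul_right ?_ (norm_pos_iff.2 hw)
  rw [real_inner_comm (J ν)] at hβw
  nlinarith [h w]

theorem exists_norm_le_mul_norm_form (hZ : ∀ z ∈ Z, eps z = 0) {CK : ℝ} (hCK : 0 < CK)
    (hKorn : ∀ u : V, (∀ z ∈ Z, ⟪J u, J z⟫ = 0) → CK * ‖u‖ ^ 2 ≤ ‖eps u‖ ^ 2)
    {C₀ : ℝ} (hC₀ : 0 ≤ C₀) (hrig : ∀ z ∈ Z, ‖z‖ ≤ C₀ * ‖J z‖) [FiniteDimensional ℝ Z]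
    {β : ℝ} (hβ : 0 < β)
    (hinfsup : ∀ (p : QL), ∀ η ∈ Z, ∃ v : V, v ≠ 0 ∧
        β * √(‖p‖ ^ 2 + ‖J η‖ ^ 2) * ‖v‖ ≤ ⟪p, dv v⟫ + ⟪J v, J η⟫)
    (hμ : 0 < μ) (heps_le : ∀ v, ‖eps v‖ ≤ ‖v‖) :
    ∃ Γ > 0, ∀ lam, 0 ≤ lam → ∀ x : Space V QL Z, ‖x‖ ≤ Γ * ‖form J eps dv Z μ lam x‖ := by
  set a := (√CK)⁻¹ + 2 * μ * (1 + C₀) / β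
  set b := C₀ ^ 2 + (1 + C₀) / β
  refine ⟨a ^ 2 / (2 * μ) + 2 * b, by positivity, fun lam hlam x => ?_⟩
  set D := ‖form J eps dv Z μ lam x‖
  set s := ‖eps x.fst‖
  have hu : ‖x.fst‖ ≤ s / √CK + C₀ ^ 2 * D :=
    norm_le_of_inner_le hZ hCK hKorn hC₀ hrig (norm_nonneg (form J eps dv Z μ lam x))
      fun z hz => by
        simpa [form_apply, norm_mk] using form_le_mul_norm J eps dv μ lam x (mk (0, 0, ⟨z, hz⟩))
  have hpν : β * √(‖x.snd.fst‖ ^ 2 + ‖J x.snd.snd‖ ^ 2) ≤ D + 2 * μ * s :=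
    inf_sup_le hinfsup hμ.le heps_le x.snd.snd.2 fun w => by
      simpa [form_apply, norm_mk] using form_le_mul_norm J eps dv μ lam x (mk (w, 0, 0))
  have hp : ‖x.snd.fst‖ ≤ (D + 2 * μ * s) / β := by
    rw [le_div_iff₀' hβ]
    refine le_trans ?_ hpν
    gcongr
    exact Real.le_sqrt_of_sq_le (le_add_of_nonneg_right (by positivity))
  have hν : ‖(x.snd.snd : V)‖ ≤ C₀ * ((D + 2 * μ * s) / β) := by
    refine (hrig _ x.snd.snd.2).trans (mul_le_mul_of_nonneg_left ?_ hC₀)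
    rw [le_div_iff₀' hβ]
    refine le_trans ?_ hpν
    gcongr
    exact Real.le_sqrt_of_sq_le (le_add_of_nonneg_left (by positivity))
  refine le_mul_of_le_add_of_mul_sq_le (by positivity) (by positivity)
    (norm_nonneg (form J eps dv Z μ lam x)) ?_ (energy_le hlam x)
  calc ‖x‖ ≤ ‖x.fst‖ + ‖x.snd.fst‖ + ‖(x.snd.snd : V)‖ := norm_le_add x
    _ ≤ (s / √CK + C₀ ^ 2 * D) + (D + 2 * μ * s) / β + C₀ * ((D + 2 * μ * s) / β) := by
      gcongr
    _ = a * s + b * D := by ring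

end ThreeField

theorem three_field_mixed_formulation_lambda_robust_general
    {V HL SL QL WL : Type}
    [NormedAddCommGroup V] [InnerProductSpace ℝ V] [CompleteSpace V]
    [NormedAddCommGroup HL] [InnerProductSpace ℝ HL]
    [NormedAddCommGroup SL] [InnerProductSpace ℝ SL]
    [NormedAddCommGroup QL] [InnerProductSpace ℝ QL] [CompleteSpace QL]
    [NormedAddCommGroup WL] [InnerProductSpace ℝ WL]
    (J : V →L[ℝ] HL) (eps : V →L[ℝ] SL) (dv : V →L[ℝ] QL) (grad : V →L[ℝ] WL)
    (hnorm : ∀ v : V, ‖v‖ ^ 2 = ‖J v‖ ^ 2 + ‖grad v‖ ^ 2)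
    (heps : ∀ v : V, ‖eps v‖ ≤ ‖grad v‖)
    (Z : Submodule ℝ V) (hZ : ∀ v : V, v ∈ Z ↔ eps v = 0)
    (hZdim : Module.finrank ℝ Z = 6)
    (CK : ℝ) (hCK : 0 < CK)
    (hKorn : ∀ u : V, (∀ z ∈ Z, ⟪J u, J z⟫ = 0) → CK * ‖u‖ ^ 2 ≤ ‖eps u‖ ^ 2)
    (C₀ : ℝ) (hC₀ : 0 < C₀)
    (hrig : ∀ z ∈ Z, ‖z‖ ≤ C₀ * ‖J z‖)
    (β : ℝ) (hβ : 0 < β)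
    (hinfsup : ∀ (p : QL), ∀ η ∈ Z, ∃ v : V, v ≠ 0 ∧
        β * Real.sqrt (‖p‖ ^ 2 + ‖J η‖ ^ 2) * ‖v‖ ≤ ⟪p, dv v⟫ + ⟪J v, J η⟫)
    (μ : ℝ) (hμ : 0 < μ) :
    ∃ C > (0 : ℝ), ∀ lam : ℝ, 0 < lam → ∀ l : V →L[ℝ] ℝ,
      -- existence and uniqueness of the triplet (u, p, ν)
      (∃! upν : V × QL × Z,
          (∀ v : V, 2 * μ * ⟪eps upν.1, eps v⟫ + ⟪upν.2.1, dv v⟫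
              + ⟪J (upν.2.2 : V), J v⟫ = l v)
          ∧ (∀ q : QL, ⟪q, dv upν.1⟫ - lam⁻¹ * ⟪upν.2.1, q⟫ = 0)
          ∧ (∀ η ∈ Z, ⟪J η, J upν.1⟫ = 0))
      -- λ-independent stability
      ∧ (∀ (u : V) (p : QL) (ν : V), ν ∈ Z →
          ((∀ v : V, 2 * μ * ⟪eps u, eps v⟫ + ⟪p, dv v⟫ + ⟪J ν, J v⟫ = l v)
            ∧ (∀ q : QL, ⟪q, dv u⟫ - lam⁻¹ * ⟪p, q⟫ = 0)
            ∧ (∀ η ∈ Z, ⟪J η, J u⟫ = 0)) →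
          ‖u‖ + ‖p‖ + ‖J ν‖ ≤ C * ‖l‖) := by
  have : FiniteDimensional ℝ Z := Module.finite_of_finrank_pos (by omega)
  have hJ_le (v : V) : ‖J v‖ ≤ ‖v‖ :=
    le_of_sq_le_sq (by nlinarith [hnorm v, sq_nonneg ‖grad v‖]) (norm_nonneg v)
  have heps_le (v : V) : ‖eps v‖ ≤ ‖v‖ :=
    (heps v).trans (le_of_sq_le_sq (by nlinarith [hnorm v, sq_nonneg ‖J v‖]) (norm_nonneg v))
  obtain ⟨Γ, hΓ, hbound⟩ := ThreeField.exists_norm_le_mul_norm_form (fun z => (hZ z).1) hCK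
    hKorn hC₀.le hrig hβ hinfsup hμ heps_le
  refine ⟨√3 * Γ, by positivity, fun lam hlam l => ?_⟩
  have hbij : Function.Bijective (ThreeField.form J eps dv Z μ lam ∘ ThreeField.mk) :=
    (bijective_of_symm_of_inf_sup (ThreeField.form_comm J eps dv μ lam) (inv_pos.2 hΓ)
      fun x => by rw [inv_mul_le_iff₀ hΓ]; exact hbound lam hlam.le x).comp
      ThreeField.mk_bijective
  have hF : ‖l.comp (WithLp.fstL 2 ℝ V (WithLp 2 (QL × Z)))‖ ≤ ‖l‖ :=
    ContinuousLinearMap.opNorm_le_bound _ (norm_nonneg l) fun y =>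
      (l.le_opNorm _).trans (mul_le_mul_of_nonneg_left (WithLp.norm_fst_le V y) (norm_nonneg l))
  refine ⟨(existsUnique_congr fun t => ThreeField.form_mk_eq_iff J eps dv μ lam l t).1
    (hbij.existsUnique _), fun u p ν hν hsol => ?_⟩
  have hx := (ThreeField.form_mk_eq_iff J eps dv μ lam l (u, p, ⟨ν, hν⟩)).2 hsol
  calc ‖u‖ + ‖p‖ + ‖J ν‖ ≤ ‖u‖ + ‖p‖ + ‖ν‖ := by gcongr; exact hJ_le ν
    _ ≤ √3 * ‖ThreeField.mk (u, p, ⟨ν, hν⟩)‖ :=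
      ThreeField.add_le_sqrt_three_mul_norm (ThreeField.mk (u, p, ⟨ν, hν⟩))
    _ ≤ √3 * (Γ * ‖l.comp (WithLp.fstL 2 ℝ V (WithLp 2 (QL × Z)))‖) := by
      gcongr; rw [← hx]; exact hbound lam hlam.le _
    _ ≤ √3 * Γ * ‖l‖ := by rw [← mul_assoc]; gcongr

/-- λ-robust well-posedness of the three-field mixed formulation.

Abstract Hilbert-space formalization: `V ≅ [H¹(Ω)]³` with the norm `‖·‖₁`
(`‖v‖₁² = ‖Jv‖² + ‖grad v‖²`), `J : V → HL ≅ [L²(Ω)]³` the (injective) embedding,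
`QL ≅ Q = L²(Ω)`, `eps` the symmetric gradient, `dv` the divergence,
`Z = ker ε` the six-dimensional space of rigid motions.  On a smooth bounded domain:
Korn's second inequality holds on `Z⊥` (constant `CK`), `‖z‖₁ ≤ C₀‖z‖_{L²}` on `Z`,
and the inf-sup condition for `b(v,(p,η)) = (p,∇·v)_{L²} + (v,η)_{L²}` holds with
constant `β > 0` (Lemma on smooth domains; hypothesis `hinfsup`).

Conclusion: for `μ > 0` there is a stability constant `C > 0`, independent of `λ`,
such that for every `λ > 0` and every `l ∈ V*` there is a unique triplet
`(u,p,ν) ∈ V × Q × Z` with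
`2μ(ε(u),ε(v)) + (p,∇·v) + (ν,v) = ⟨l,v⟩ ∀ v ∈ V`,
`(q,∇·u) − λ⁻¹(p,q) = 0 ∀ q ∈ Q`, `(η,u) = 0 ∀ η ∈ Z`, and moreover
`‖u‖₁ + ‖p‖_{L²} + ‖ν‖_{L²} ≤ C‖l‖_{V*}`. -/
theorem three_field_mixed_formulation_lambda_robust
    {V HL SL QL WL : Type}
    [NormedAddCommGroup V] [InnerProductSpace ℝ V] [CompleteSpace V]
    [NormedAddCommGroup HL] [InnerProductSpace ℝ HL]
    [NormedAddCommGroup SL] [InnerProductSpace ℝ SL]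
    [NormedAddCommGroup QL] [InnerProductSpace ℝ QL] [CompleteSpace QL]
    [NormedAddCommGroup WL] [InnerProductSpace ℝ WL]
    (J : V →L[ℝ] HL) (eps : V →L[ℝ] SL) (dv : V →L[ℝ] QL) (grad : V →L[ℝ] WL)
    (hJ : Function.Injective J)
    (hnorm : ∀ v : V, ‖v‖ ^ 2 = ‖J v‖ ^ 2 + ‖grad v‖ ^ 2)
    (heps : ∀ v : V, ‖eps v‖ ≤ ‖grad v‖)
    (hdvg : ∀ v : V, ‖dv v‖ ≤ Real.sqrt 3 * ‖grad v‖)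
    (hdve : ∀ v : V, ‖dv v‖ ≤ Real.sqrt 3 * ‖eps v‖)
    (Z : Submodule ℝ V) (hZ : ∀ v : V, v ∈ Z ↔ eps v = 0)
    (hZdim : Module.finrank ℝ Z = 6)
    (CK : ℝ) (hCK : 0 < CK)
    (hKorn : ∀ u : V, (∀ z ∈ Z, ⟪J u, J z⟫ = 0) → CK * ‖u‖ ^ 2 ≤ ‖eps u‖ ^ 2)
    (C₀ : ℝ) (hC₀ : 0 < C₀)
    (hrig : ∀ z ∈ Z, ‖z‖ ≤ C₀ * ‖J z‖)
    (β : ℝ) (hβ : 0 < β)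
    (hinfsup : ∀ (p : QL), ∀ η ∈ Z, ∃ v : V, v ≠ 0 ∧
        β * Real.sqrt (‖p‖ ^ 2 + ‖J η‖ ^ 2) * ‖v‖ ≤ ⟪p, dv v⟫ + ⟪J v, J η⟫)
    (μ : ℝ) (hμ : 0 < μ) :
    ∃ C > (0 : ℝ), ∀ lam : ℝ, 0 < lam → ∀ l : V →L[ℝ] ℝ,
      -- existence and uniqueness of the triplet (u, p, ν)
      (∃! upν : V × QL × Z,
          (∀ v : V, 2 * μ * ⟪eps upν.1, eps v⟫ + ⟪upν.2.1, dv v⟫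
              + ⟪J (upν.2.2 : V), J v⟫ = l v)
          ∧ (∀ q : QL, ⟪q, dv upν.1⟫ - lam⁻¹ * ⟪upν.2.1, q⟫ = 0)
          ∧ (∀ η ∈ Z, ⟪J η, J upν.1⟫ = 0))
      -- λ-independent stability
      ∧ (∀ (u : V) (p : QL) (ν : V), ν ∈ Z →
          ((∀ v : V, 2 * μ * ⟪eps u, eps v⟫ + ⟪p, dv v⟫ + ⟪J ν, J v⟫ = l v)
            ∧ (∀ q : QL, ⟪q, dv u⟫ - lam⁻¹ * ⟪p, q⟫ = 0)
            ∧ (∀ η ∈ Z, ⟪J η, J u⟫ = 0)) →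
          ‖u‖ + ‖p‖ + ‖J ν‖ ≤ C * ‖l‖) :=
  three_field_mixed_formulation_lambda_robust_general J eps dv grad hnorm heps Z hZ hZdim CK hCK
    hKorn C₀ hC₀ hrig β hβ hinfsup μ hμ
end

section
/- Let Ω have smooth boundary, μ > 0, λ > 0, and define, for u ∈ V with L²-orthogonal decomposition u = u_Z + u_{Z⊥} (u_Z ∈ Z, u_{Z⊥} ∈ Z⊥), the bilinear form ⟨(A+Y)u, v⟩ = 2μ(ε(u),ε(v))_{L²} + (u_Z, v_Z)_{L²}. Then for each l ∈ V* there exists a unique pair (u, p) ∈ V × Q satisfying ⟨(A+Y)u, v⟩ + (p, ∇·v)_{L²} = ⟨l, v⟩ for all v ∈ V and (q, ∇·u)_{L²} − λ⁻¹(p, q)_{L²} = 0 for all q ∈ Q. Moreover, if l ∈ Z° then u ∈ Z⊥ and the triplet (u, p, 0) is the unique solution of the three-field problem: 2μ(ε(u),ε(v)) + (p,∇·v) + (ν,v) = ⟨l,v⟩, (q,∇·u) − λ⁻¹(p,q) = 0, (η,u) = 0 for all v ∈ V, q ∈ Q, η ∈ Z, with ν = 0. -/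
/-!
Eliminating the pressure through the second equation, `p = λ ∇·u`, turns the saddle point
problem into `B u = l` for the form `B(u,v) = 2μ(ε u, ε v) + (u_Z, v_Z) + λ(∇·u, ∇·v)`.
Splitting `u = (u - u_Z) + u_Z`, Korn's inequality controls the first part by `‖ε u‖` and the
norm equivalence on `Z` controls the second by `‖u_Z‖_{L²}`, so `B` is coercive and Lax–Milgram
gives existence and uniqueness. If `l` vanishes on `Z`, testing with `v = u_Z` gives `u_Z = 0`;
testing the three-field problem with `v = ν` gives `ν = 0`, and its last equation says
`u'_Z = 0`, so it reduces to the single saddle point problem.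
-/

open RealInnerProductSpace

theorem IsCoercive.existsUnique_apply_eq {V : Type*} [NormedAddCommGroup V]
    [InnerProductSpace ℝ V] [CompleteSpace V] {B : V →L[ℝ] V →L[ℝ] ℝ} (hB : IsCoercive B)
    (l : V →L[ℝ] ℝ) : ∃! u, B u = l := by
  have hB_eq : ∀ u, B u = InnerProductSpace.toDual ℝ V (hB.continuousLinearEquivOfBilin u) :=
    fun u => by ext w; simp
  simp_rw [hB_eq]
  exact (hB.continuousLinearEquivOfBilin.toEquiv.trans
    (InnerProductSpace.toDual ℝ V).toEquiv).bijective.existsUnique l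

theorem forall_inner_sub_inv_mul_inner_eq_zero_iff {Q : Type*} [NormedAddCommGroup Q]
    [InnerProductSpace ℝ Q] {lam : ℝ} (hlam : lam ≠ 0) (d p : Q) :
    (∀ q : Q, ⟪q, d⟫ - lam⁻¹ * ⟪p, q⟫ = 0) ↔ p = lam • d := by
  constructor
  · intro h
    have hd : d = lam⁻¹ • p := ext_inner_left ℝ fun q => by
      rw [real_inner_smul_right, ← sub_eq_zero, real_inner_comm p q]
      exact h q
    rw [hd, smul_inv_smul₀ hlam]
  · rintro rfl q
    rw [real_inner_smul_left, real_inner_comm, inv_mul_cancel_left₀ hlam, sub_self]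

section Projection

variable {V H : Type*} [NormedAddCommGroup V] [InnerProductSpace ℝ V]
  [NormedAddCommGroup H] [InnerProductSpace ℝ H] {J : V →L[ℝ] H} {Z : Submodule ℝ V}
  {P : V → V}

theorem norm_map_projection_le (hPmem : ∀ u, P u ∈ Z)
    (hPperp : ∀ u, ∀ z ∈ Z, ⟪J (u - P u), J z⟫ = 0) (u : V) : ‖J (P u)‖ ≤ ‖J u‖ := by
  have hpyth := norm_add_sq_eq_norm_sq_add_norm_sq_real (hPperp u (P u) (hPmem u))
  rw [← map_add, sub_add_cancel] at hpyth
  rw [mul_self_le_mul_self_iff (norm_nonneg _) (norm_nonneg _), hpyth]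
  exact le_add_of_nonneg_left (mul_self_nonneg _)

theorem norm_projection_le (hPmem : ∀ u, P u ∈ Z)
    (hPperp : ∀ u, ∀ z ∈ Z, ⟪J (u - P u), J z⟫ = 0) {C : ℝ} (hrig : ∀ z ∈ Z, ‖z‖ ≤ C * ‖J z‖)
    (u : V) : ‖P u‖ ≤ |C| * ‖J‖ * ‖u‖ :=
  calc ‖P u‖ ≤ C * ‖J (P u)‖ := hrig (P u) (hPmem u)
    _ ≤ |C| * ‖J u‖ :=
      mul_le_mul (le_abs_self C) (norm_map_projection_le hPmem hPperp u) (norm_nonneg _)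
        (abs_nonneg C)
    _ ≤ |C| * ‖J‖ * ‖u‖ := by
      rw [mul_assoc]
      exact mul_le_mul_of_nonneg_left (J.le_opNorm u) (abs_nonneg C)

theorem map_projection_eq_zero_iff (hPmem : ∀ u, P u ∈ Z)
    (hPperp : ∀ u, ∀ z ∈ Z, ⟪J (u - P u), J z⟫ = 0) {u : V} :
    J (P u) = 0 ↔ ∀ z ∈ Z, ⟪J u, J z⟫ = 0 := by
  have hsplit : ∀ z ∈ Z, ⟪J u, J z⟫ = ⟪J (P u), J z⟫ := fun z hz => by
    rw [← sub_eq_zero, ← inner_sub_left, ← map_sub]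
    exact hPperp u z hz
  constructor
  · intro h z hz
    rw [hsplit z hz, h, inner_zero_left]
  · intro h
    rw [← inner_self_eq_zero (𝕜 := ℝ), ← hsplit _ (hPmem u)]
    exact h _ (hPmem u)

theorem projection_apply_of_mem (hJ : Function.Injective J) (hPmem : ∀ u, P u ∈ Z)
    (hPperp : ∀ u, ∀ z ∈ Z, ⟪J (u - P u), J z⟫ = 0) {z : V} (hz : z ∈ Z) : P z = z := by
  have h := hPperp z (z - P z) (Z.sub_mem hz (hPmem z))
  rw [inner_self_eq_zero (𝕜 := ℝ), ← map_zero J] at h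
  exact (sub_eq_zero.mp (hJ h)).symm

end Projection

section SaddlePoint

variable {V H S Q : Type*} [NormedAddCommGroup V] [InnerProductSpace ℝ V]
  [NormedAddCommGroup H] [InnerProductSpace ℝ H] [NormedAddCommGroup S] [InnerProductSpace ℝ S]
  [NormedAddCommGroup Q] [InnerProductSpace ℝ Q] {μ lam : ℝ}
  {eps : V →L[ℝ] S} {J : V →L[ℝ] H} {P : V →L[ℝ] V} {dv : V →L[ℝ] Q} {Z : Submodule ℝ V}
  {l : V →L[ℝ] ℝ}

theorem sq_norm_le_of_korn {C₁ C₂ : ℝ} (hC₁ : 0 < C₁) (hεZ : ∀ z ∈ Z, eps z = 0)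
    (hPmem : ∀ u, P u ∈ Z) (hPperp : ∀ u, ∀ z ∈ Z, ⟪J (u - P u), J z⟫ = 0)
    (hKorn : ∀ u, (∀ z ∈ Z, ⟪J u, J z⟫ = 0) → C₁ * ‖u‖ ^ 2 ≤ ‖eps u‖ ^ 2)
    (hrig : ∀ z ∈ Z, ‖z‖ ≤ C₂ * ‖J z‖) (u : V) :
    ‖u‖ ^ 2 ≤ 2 * C₁⁻¹ * ‖eps u‖ ^ 2 + 2 * C₂ ^ 2 * ‖J (P u)‖ ^ 2 := by
  have hsplit : ‖u‖ ^ 2 ≤ 2 * (‖u - P u‖ ^ 2 + ‖P u‖ ^ 2) := by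
    refine le_trans ?_ add_sq_le
    gcongr
    simpa using norm_add_le (u - P u) (P u)
  have hkorn : ‖u - P u‖ ^ 2 ≤ C₁⁻¹ * ‖eps u‖ ^ 2 := by
    rw [le_inv_mul_iff₀ hC₁]
    simpa [hεZ _ (hPmem u)] using hKorn (u - P u) (hPperp u)
  have hrig_sq : ‖P u‖ ^ 2 ≤ C₂ ^ 2 * ‖J (P u)‖ ^ 2 := by
    rw [← mul_pow]
    exact pow_le_pow_left₀ (norm_nonneg _) (hrig _ (hPmem u)) 2
  linarith

variable (μ lam eps J P dv) in
noncomputable def penalizedForm : V →L[ℝ] V →L[ℝ] ℝ :=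
  (2 * μ) • (innerSL ℝ).bilinearComp eps eps + (innerSL ℝ).bilinearComp (J ∘L P) (J ∘L P)
    + lam • (innerSL ℝ).bilinearComp dv dv

variable (μ lam eps J P dv) in
@[simp]
theorem penalizedForm_apply (u v : V) :
    penalizedForm μ lam eps J P dv u v
      = 2 * μ * ⟪eps u, eps v⟫ + ⟪J (P u), J (P v)⟫ + lam * ⟪dv u, dv v⟫ := by
  simp [penalizedForm]

theorem isCoercive_penalizedForm {C₁ C₂ : ℝ} (hμ : 0 < μ) (hlam : 0 ≤ lam) (hC₁ : 0 < C₁)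
    (hεZ : ∀ z ∈ Z, eps z = 0) (hPmem : ∀ u, P u ∈ Z)
    (hPperp : ∀ u, ∀ z ∈ Z, ⟪J (u - P u), J z⟫ = 0)
    (hKorn : ∀ u, (∀ z ∈ Z, ⟪J u, J z⟫ = 0) → C₁ * ‖u‖ ^ 2 ≤ ‖eps u‖ ^ 2)
    (hrig : ∀ z ∈ Z, ‖z‖ ≤ C₂ * ‖J z‖) : IsCoercive (penalizedForm μ lam eps J P dv) := by
  have hK : 0 < (C₁ * μ)⁻¹ + 2 * C₂ ^ 2 := by positivity
  refine ⟨((C₁ * μ)⁻¹ + 2 * C₂ ^ 2)⁻¹, inv_pos.2 hK, fun u => ?_⟩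
  simp only [penalizedForm_apply, real_inner_self_eq_norm_sq]
  rw [mul_assoc, inv_mul_le_iff₀ hK, ← sq]
  have hε := sq_nonneg ‖eps u‖
  have hJP := sq_nonneg ‖J (P u)‖
  have hdv := mul_nonneg hlam (sq_nonneg ‖dv u‖)
  calc ‖u‖ ^ 2 ≤ 2 * C₁⁻¹ * ‖eps u‖ ^ 2 + 2 * C₂ ^ 2 * ‖J (P u)‖ ^ 2 :=
        sq_norm_le_of_korn hC₁ hεZ hPmem hPperp hKorn hrig u
    _ = (C₁ * μ)⁻¹ * (2 * μ * ‖eps u‖ ^ 2) + 2 * C₂ ^ 2 * ‖J (P u)‖ ^ 2 := by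
        field_simp
    _ ≤ ((C₁ * μ)⁻¹ + 2 * C₂ ^ 2)
          * (2 * μ * ‖eps u‖ ^ 2 + ‖J (P u)‖ ^ 2 + lam * ‖dv u‖ ^ 2) := by
        have hinv : 0 ≤ (C₁ * μ)⁻¹ := by positivity
        nlinarith [mul_nonneg hinv hJP, mul_nonneg hinv hdv, mul_nonneg (sq_nonneg C₂) hε,
          mul_nonneg (sq_nonneg C₂) hdv, mul_nonneg hinv (mul_nonneg hμ.le hε)]


variable (μ lam eps J P dv l) in
def IsSingleSaddleSolution (u : V) (p : Q) : Prop :=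
  (∀ v : V, 2 * μ * ⟪eps u, eps v⟫ + ⟪J (P u), J (P v)⟫ + ⟪p, dv v⟫ = l v)
    ∧ ∀ q : Q, ⟪q, dv u⟫ - lam⁻¹ * ⟪p, q⟫ = 0

variable (μ lam eps J dv Z l) in
def IsThreeFieldSolution (u : V) (p : Q) (ν : V) : Prop :=
  (∀ v : V, 2 * μ * ⟪eps u, eps v⟫ + ⟪p, dv v⟫ + ⟪J ν, J v⟫ = l v)
    ∧ (∀ q : Q, ⟪q, dv u⟫ - lam⁻¹ * ⟪p, q⟫ = 0) ∧ ∀ η ∈ Z, ⟪J η, J u⟫ = 0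

theorem isSingleSaddleSolution_iff (hlam : lam ≠ 0) {u : V} {p : Q} :
    IsSingleSaddleSolution μ lam eps J P dv l u p
      ↔ penalizedForm μ lam eps J P dv u = l ∧ p = lam • dv u := by
  rw [IsSingleSaddleSolution, forall_inner_sub_inv_mul_inner_eq_zero_iff hlam,
    ContinuousLinearMap.ext_iff]
  refine and_congr_left fun hp => forall_congr' fun v => ?_
  rw [hp, penalizedForm_apply, real_inner_smul_left]

theorem existsUnique_isSingleSaddleSolution [CompleteSpace V]
    (hB : IsCoercive (penalizedForm μ lam eps J P dv))
    (hlam : lam ≠ 0) (l : V →L[ℝ] ℝ) :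
    ∃! up : V × Q, IsSingleSaddleSolution μ lam eps J P dv l up.1 up.2 := by
  obtain ⟨u, hu, huniq⟩ := hB.existsUnique_apply_eq l
  refine ⟨(u, lam • dv u), (isSingleSaddleSolution_iff hlam).2 ⟨hu, rfl⟩, fun ⟨u', p'⟩ h => ?_⟩
  obtain ⟨hu', hp'⟩ := (isSingleSaddleSolution_iff (p := p') hlam).1 h
  obtain rfl := huniq u' hu'
  rw [hp']

theorem IsSingleSaddleSolution.projection_eq_zero (hJ : Function.Injective J)
    (hεZ : ∀ z ∈ Z, eps z = 0) (hdvZ : ∀ z ∈ Z, dv z = 0) (hPmem : ∀ u, P u ∈ Z)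
    (hPperp : ∀ u, ∀ z ∈ Z, ⟪J (u - P u), J z⟫ = 0) (hl : ∀ z ∈ Z, l z = 0) {u : V} {p : Q}
    (h : IsSingleSaddleSolution μ lam eps J P dv l u p) : P u = 0 := by
  have hPu := hPmem u
  refine (map_eq_zero_iff J hJ).1 ?_
  simpa [hεZ _ hPu, hdvZ _ hPu, hl _ hPu, projection_apply_of_mem hJ hPmem hPperp hPu]
    using h.1 (P u)

theorem isThreeFieldSolution_zero_iff (hJ : Function.Injective J) (hPmem : ∀ u, P u ∈ Z)
    (hPperp : ∀ u, ∀ z ∈ Z, ⟪J (u - P u), J z⟫ = 0) {u : V} {p : Q} :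
    IsThreeFieldSolution μ lam eps J dv Z l u p 0
      ↔ IsSingleSaddleSolution μ lam eps J P dv l u p ∧ P u = 0 := by
  have hPu : P u = 0 ↔ ∀ η ∈ Z, ⟪J η, J u⟫ = 0 := by
    simp_rw [← map_eq_zero_iff J hJ, map_projection_eq_zero_iff hPmem hPperp,
      real_inner_comm (J u)]
  constructor
  · rintro ⟨h₁, h₂, h₃⟩
    have hP := hPu.2 h₃
    exact ⟨⟨fun v => by simpa [hP] using h₁ v, h₂⟩, hP⟩
  · rintro ⟨⟨h₁, h₂⟩, hP⟩
    exact ⟨fun v => by simpa [hP] using h₁ v, h₂, hPu.1 hP⟩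

theorem IsThreeFieldSolution.eq_zero (hJ : Function.Injective J) (hεZ : ∀ z ∈ Z, eps z = 0)
    (hdvZ : ∀ z ∈ Z, dv z = 0) (hl : ∀ z ∈ Z, l z = 0) {u ν : V} {p : Q} (hν : ν ∈ Z)
    (h : IsThreeFieldSolution μ lam eps J dv Z l u p ν) : ν = 0 :=
  (map_eq_zero_iff J hJ).1 (by simpa [hεZ ν hν, hdvZ ν hν, hl ν hν] using h.1 ν)

end SaddlePoint

theorem single_saddle_point_formulation_general
    {V HL SL QL : Type}
    [NormedAddCommGroup V] [InnerProductSpace ℝ V] [CompleteSpace V]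
    [NormedAddCommGroup HL] [InnerProductSpace ℝ HL]
    [NormedAddCommGroup SL] [InnerProductSpace ℝ SL]
    [NormedAddCommGroup QL] [InnerProductSpace ℝ QL]
    (J : V →L[ℝ] HL) (eps : V →L[ℝ] SL) (dv : V →L[ℝ] QL)
    (hJ : Function.Injective J)
    (hdve : ∀ v : V, ‖dv v‖ ≤ Real.sqrt 3 * ‖eps v‖)
    (Z : Submodule ℝ V) (hZ : ∀ v : V, v ∈ Z ↔ eps v = 0)
    (PZ : V →ₗ[ℝ] V)
    (hPZmem : ∀ u : V, PZ u ∈ Z)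
    (hPZperp : ∀ u : V, ∀ z ∈ Z, ⟪J (u - PZ u), J z⟫ = 0)
    (C₁ : ℝ) (hC₁ : 0 < C₁)
    (hKorn : ∀ u : V, (∀ z ∈ Z, ⟪J u, J z⟫ = 0) → C₁ * ‖u‖ ^ 2 ≤ ‖eps u‖ ^ 2)
    (C₂ : ℝ)
    (hrig : ∀ z ∈ Z, ‖z‖ ≤ C₂ * ‖J z‖)
    (μ lam : ℝ) (hμ : 0 < μ) (hlam : 0 < lam)
    (l : V →L[ℝ] ℝ) :
    -- existence and uniqueness for the single saddle point problem
    (∃! up : V × QL,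
        (∀ v : V, 2 * μ * ⟪eps up.1, eps v⟫ + ⟪J (PZ up.1), J (PZ v)⟫
            + ⟪up.2, dv v⟫ = l v)
        ∧ (∀ q : QL, ⟪q, dv up.1⟫ - lam⁻¹ * ⟪up.2, q⟫ = 0))
    -- if l ∈ Z° the solution is orthogonal to Z and (u, p, 0) is the unique
    -- solution of the three-field problem
    ∧ ((∀ z ∈ Z, l z = 0) →
        ∀ (u : V) (p : QL),
          ((∀ v : V, 2 * μ * ⟪eps u, eps v⟫ + ⟪J (PZ u), J (PZ v)⟫
              + ⟪p, dv v⟫ = l v)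
            ∧ (∀ q : QL, ⟪q, dv u⟫ - lam⁻¹ * ⟪p, q⟫ = 0)) →
          (∀ z ∈ Z, ⟪J u, J z⟫ = 0)
          ∧ ((∀ v : V, 2 * μ * ⟪eps u, eps v⟫ + ⟪p, dv v⟫
                + ⟪J (0 : V), J v⟫ = l v)
              ∧ (∀ q : QL, ⟪q, dv u⟫ - lam⁻¹ * ⟪p, q⟫ = 0)
              ∧ (∀ η ∈ Z, ⟪J η, J u⟫ = 0))
          ∧ (∀ (u' : V) (p' : QL) (ν' : V), ν' ∈ Z →
              ((∀ v : V, 2 * μ * ⟪eps u', eps v⟫ + ⟪p', dv v⟫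
                  + ⟪J ν', J v⟫ = l v)
                ∧ (∀ q : QL, ⟪q, dv u'⟫ - lam⁻¹ * ⟪p', q⟫ = 0)
                ∧ (∀ η ∈ Z, ⟪J η, J u'⟫ = 0)) →
              u' = u ∧ p' = p ∧ ν' = 0)) := by
  have hεZ : ∀ z ∈ Z, eps z = 0 := fun z => (hZ z).1
  have hdvZ : ∀ z ∈ Z, dv z = 0 := fun z hz =>
    norm_le_zero_iff.1 (by simpa [hεZ z hz] using hdve z)
  obtain ⟨P, rfl⟩ : ∃ P : V →L[ℝ] V, (P : V →ₗ[ℝ] V) = PZ :=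
    ⟨PZ.mkContinuous _ (norm_projection_le hPZmem hPZperp hrig), rfl⟩
  simp only [ContinuousLinearMap.coe_coe] at hPZmem hPZperp ⊢
  have hsol := existsUnique_isSingleSaddleSolution
    (isCoercive_penalizedForm (dv := dv) hμ hlam.le hC₁ hεZ hPZmem hPZperp hKorn hrig) hlam.ne' l
  refine ⟨hsol, fun hl u p (hup : IsSingleSaddleSolution μ lam eps J P dv l u p) => ?_⟩
  have hPu := hup.projection_eq_zero hJ hεZ hdvZ hPZmem hPZperp hl
  have hthree := (isThreeFieldSolution_zero_iff hJ hPZmem hPZperp).2 ⟨hup, hPu⟩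
  refine ⟨(map_projection_eq_zero_iff hPZmem hPZperp).1 (by rw [hPu, map_zero]), hthree,
    fun u' p' ν hν (h' : IsThreeFieldSolution μ lam eps J dv Z l u' p' ν) => ?_⟩
  obtain rfl := h'.eq_zero hJ hεZ hdvZ hl hν
  have hup' := ((isThreeFieldSolution_zero_iff hJ hPZmem hPZperp).1 h').1
  obtain ⟨rfl, rfl⟩ := Prod.ext_iff.1 (hsol.unique (y₁ := (u', p')) (y₂ := (u, p)) hup' hup)
  exact ⟨rfl, rfl, rfl⟩

/-- single saddle point formulation of the mixed problem.

Abstract Hilbert-space formalization: `V ≅ [H¹(Ω)]³` with the norm `‖·‖₁`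
(`‖v‖₁² = ‖Jv‖² + ‖grad v‖²`), `J : V → HL ≅ [L²(Ω)]³` the (injective) embedding,
`QL ≅ Q = L²(Ω)`, `eps` the symmetric gradient, `dv` the divergence,
`Z = ker ε` the six-dimensional space of rigid motions, `PZ` the L²-orthogonal
projection onto `Z` (so `u_Z = PZ u` and
`⟨(A+Y)u,v⟩ = 2μ(ε(u),ε(v))_{L²} + (u_Z,v_Z)_{L²}`).  On a smooth bounded domain:
Korn's second inequality holds on `Z⊥` (constant `C₁`), `‖z‖₁ ≤ C₂‖z‖_{L²}` on `Z`,
and the divergence inf-sup condition holds with constant `Cd⁻¹` (hypothesis `hdiv`).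

Conclusion: for `μ > 0`, `λ > 0` and each `l ∈ V*` there is a unique pair
`(u,p) ∈ V × Q` with `⟨(A+Y)u,v⟩ + (p,∇·v) = ⟨l,v⟩ ∀ v ∈ V` and
`(q,∇·u) − λ⁻¹(p,q) = 0 ∀ q ∈ Q`.  Moreover, if `l ∈ Z°` then `u ∈ Z⊥` and the
triplet `(u,p,0)` is the unique solution of the three-field problem. -/
theorem single_saddle_point_formulation
    {V HL SL QL WL : Type}
    [NormedAddCommGroup V] [InnerProductSpace ℝ V] [CompleteSpace V]
    [NormedAddCommGroup HL] [InnerProductSpace ℝ HL]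
    [NormedAddCommGroup SL] [InnerProductSpace ℝ SL]
    [NormedAddCommGroup QL] [InnerProductSpace ℝ QL] [CompleteSpace QL]
    [NormedAddCommGroup WL] [InnerProductSpace ℝ WL]
    (J : V →L[ℝ] HL) (eps : V →L[ℝ] SL) (dv : V →L[ℝ] QL) (grad : V →L[ℝ] WL)
    (hJ : Function.Injective J)
    (hnorm : ∀ v : V, ‖v‖ ^ 2 = ‖J v‖ ^ 2 + ‖grad v‖ ^ 2)
    (heps : ∀ v : V, ‖eps v‖ ≤ ‖grad v‖)
    (hdvg : ∀ v : V, ‖dv v‖ ≤ Real.sqrt 3 * ‖grad v‖)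
    (hdve : ∀ v : V, ‖dv v‖ ≤ Real.sqrt 3 * ‖eps v‖)
    (Z : Submodule ℝ V) (hZ : ∀ v : V, v ∈ Z ↔ eps v = 0)
    (hZdim : Module.finrank ℝ Z = 6)
    (PZ : V →ₗ[ℝ] V)
    (hPZmem : ∀ u : V, PZ u ∈ Z)
    (hPZperp : ∀ u : V, ∀ z ∈ Z, ⟪J (u - PZ u), J z⟫ = 0)
    (C₁ : ℝ) (hC₁ : 0 < C₁)
    (hKorn : ∀ u : V, (∀ z ∈ Z, ⟪J u, J z⟫ = 0) → C₁ * ‖u‖ ^ 2 ≤ ‖eps u‖ ^ 2)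
    (C₂ : ℝ) (hC₂ : 0 < C₂)
    (hrig : ∀ z ∈ Z, ‖z‖ ≤ C₂ * ‖J z‖)
    (Cd : ℝ) (hCd : 0 < Cd)
    (hdiv : ∀ p : QL, ∃ v : V, v ≠ 0 ∧ Cd⁻¹ * ‖p‖ * ‖v‖ ≤ ⟪p, dv v⟫)
    (μ lam : ℝ) (hμ : 0 < μ) (hlam : 0 < lam)
    (l : V →L[ℝ] ℝ) :
    -- existence and uniqueness for the single saddle point problem
    (∃! up : V × QL,
        (∀ v : V, 2 * μ * ⟪eps up.1, eps v⟫ + ⟪J (PZ up.1), J (PZ v)⟫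
            + ⟪up.2, dv v⟫ = l v)
        ∧ (∀ q : QL, ⟪q, dv up.1⟫ - lam⁻¹ * ⟪up.2, q⟫ = 0))
    -- if l ∈ Z° the solution is orthogonal to Z and (u, p, 0) is the unique
    -- solution of the three-field problem
    ∧ ((∀ z ∈ Z, l z = 0) →
        ∀ (u : V) (p : QL),
          ((∀ v : V, 2 * μ * ⟪eps u, eps v⟫ + ⟪J (PZ u), J (PZ v)⟫
              + ⟪p, dv v⟫ = l v)
            ∧ (∀ q : QL, ⟪q, dv u⟫ - lam⁻¹ * ⟪p, q⟫ = 0)) →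
          (∀ z ∈ Z, ⟪J u, J z⟫ = 0)
          ∧ ((∀ v : V, 2 * μ * ⟪eps u, eps v⟫ + ⟪p, dv v⟫
                + ⟪J (0 : V), J v⟫ = l v)
              ∧ (∀ q : QL, ⟪q, dv u⟫ - lam⁻¹ * ⟪p, q⟫ = 0)
              ∧ (∀ η ∈ Z, ⟪J η, J u⟫ = 0))
          ∧ (∀ (u' : V) (p' : QL) (ν' : V), ν' ∈ Z →
              ((∀ v : V, 2 * μ * ⟪eps u', eps v⟫ + ⟪p', dv v⟫
                  + ⟪J ν', J v⟫ = l v)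
                ∧ (∀ q : QL, ⟪q, dv u'⟫ - lam⁻¹ * ⟪p', q⟫ = 0)
                ∧ (∀ η ∈ Z, ⟪J η, J u'⟫ = 0)) →
              u' = u ∧ p' = p ∧ ν' = 0)) :=
  single_saddle_point_formulation_general J eps dv hJ hdve Z hZ PZ hPZmem hPZperp C₁ hC₁ hKorn C₂
    hrig μ lam hμ hlam l
end
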